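/- arXiv:1407.7476 — 6 statements merged into one kernel-verified Lean document; each statement's English description precedes it below -/
import Mathlib

section
/- Let A(Z,Z̄) be a bihomogeneous Hermitian polynomial in Z = (Z₀,Z₁,…,Zₙ) which is a sum of squares of rank p, i.e. A(Z,Z̄) = Σ_{i=1}^p |Fᵢ(Z)|² where F₁,…,F_p are linearly independent homogeneous polynomials of a common degree d. Suppose ‖Z‖²·A(Z,Z̄) = Σ_{j=1}^R |Hⱼ(Z)|² where H₁,…,H_R are linearly independent homogeneous polynomials of degree d+1 (so R is the rank of the SOS ‖Z‖²A). If p ≤ n+1, then (n+1)p − p(p−1)/2 ≤ R ≤ p(n+1). -/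
/-!
Polarizing `‖Z‖² A = Σ |H_j|²`, i.e. treating `Z` and `Z̄` as independent variables, shows that
the `H_j` and the products `Z_k F_i` span the same space of polynomials; hence
`R = dim span {Z_k F_i} ≤ (n + 1) p`. For the lower bound fix a monomial order: `span F` has exactly
`p` distinct leading exponents `m`, and `span {Z_k F_i}` has among its leading exponents all
`e_k + m`. Two distinct exponents `m ≠ m'` give at most one coincidence `e_k + m = e_l + m'`, so
there are at least `(n + 1) p - C(p, 2)` of these.
-/

open MvPolynomial ComplexConjugate Finset Module
open scoped Pointwise

namespace MvPolynomial

variable {σ : Type*}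

theorem eval_map_conj (z : σ → ℂ) (f : MvPolynomial σ ℂ) :
    eval z (map (starRingEnd ℂ) f) = conj (eval (conj ∘ z) f) := by
  rw [eval_map, eval, coe_eval₂Hom, eval₂_comp_left]
  congr 1
  ext
  simp

theorem eq_zero_of_eval_sumElim_conj_eq_zero {P : MvPolynomial (σ ⊕ σ) ℂ}
    (h : ∀ z : σ → ℂ, eval (Sum.elim z (conj ∘ z)) P = 0) : P = 0 := by
  -- `z = x + i y`, `w = x - i y`: the hypothesis says that `P` vanishes at all real `(x, y)`
  let sub : σ ⊕ σ → MvPolynomial (σ ⊕ σ) ℂ :=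
    Sum.elim (fun k => X (.inl k) + C Complex.I * X (.inr k))
      (fun k => X (.inl k) - C Complex.I * X (.inr k))
  have eval_bind₁_sub (x : σ ⊕ σ → ℂ) : eval x (bind₁ sub P) =
      eval (Sum.elim (fun k => x (.inl k) + Complex.I * x (.inr k))
        (fun k => x (.inl k) - Complex.I * x (.inr k))) P := by
    change aeval x (bind₁ sub P) = aeval _ P
    rw [aeval_bind₁]
    congr 1
    ext (k | k) <;> simp [sub]
  have hQ : bind₁ sub P = 0 := by
    refine funext_set (fun _ => Set.range ((↑) : ℝ → ℂ))
      (fun _ => Set.infinite_range_of_injective Complex.ofReal_injective) fun x hx => ?_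
    choose r hr using fun i => hx i (Set.mem_univ i)
    obtain rfl : (fun i => (r i : ℂ)) = x := _root_.funext hr
    rw [eval_bind₁_sub, map_zero]
    convert h fun k => r (.inl k) + Complex.I * r (.inr k) using 3
    ext (k | k) <;> simp [sub_eq_add_neg]
  refine funext fun w => ?_
  -- invert the substitution: `x = (z + w) / 2`, `y = i (w - z) / 2`
  have := congr(eval (Sum.elim (fun k => (w (.inl k) + w (.inr k)) / 2)
    (fun k => Complex.I * (w (.inr k) - w (.inl k)) / 2)) $hQ)
  rw [eval_bind₁_sub, map_zero] at this
  rw [map_zero, ← this]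
  congr 2
  ext (k | k) <;> simp only [Sum.elim_inl, Sum.elim_inr]
  · linear_combination (w (.inl k) - w (.inr k)) / 2 * Complex.I_mul_I
  · linear_combination (w (.inr k) - w (.inl k)) / 2 * Complex.I_mul_I

variable {ι κ : Type*} [Fintype ι] [Fintype κ]

noncomputable def polarizedSumSq (A : ι → MvPolynomial σ ℂ) : MvPolynomial (σ ⊕ σ) ℂ :=
  ∑ i, rename Sum.inl (A i) * rename Sum.inr (map (starRingEnd ℂ) (A i))

theorem eval_polarizedSumSq (A : ι → MvPolynomial σ ℂ) (z w : σ → ℂ) :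
    eval (Sum.elim z (conj ∘ w)) (polarizedSumSq A) = ∑ i, eval z (A i) * conj (eval w (A i)) := by
  have hw : conj ∘ conj ∘ w = w := by ext; simp
  simp only [polarizedSumSq, map_sum, map_mul, eval_rename, Sum.elim_comp_inl, Sum.elim_comp_inr,
    eval_map_conj, hw]

theorem sum_eval_mul_conj_eq_of_sum_norm_sq_eq {A : ι → MvPolynomial σ ℂ}
    {B : κ → MvPolynomial σ ℂ} (h : ∀ z, ∑ i, ‖eval z (A i)‖ ^ 2 = ∑ j, ‖eval z (B j)‖ ^ 2)
    (z w : σ → ℂ) :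
    ∑ i, eval z (A i) * conj (eval w (A i)) = ∑ j, eval z (B j) * conj (eval w (B j)) := by
  have hP : polarizedSumSq A - polarizedSumSq B = 0 := by
    refine eq_zero_of_eval_sumElim_conj_eq_zero fun z => ?_
    simp only [map_sub, eval_polarizedSumSq, Complex.mul_conj', sub_eq_zero]
    exact_mod_cast h z
  rw [← eval_polarizedSumSq, ← eval_polarizedSumSq, ← sub_eq_zero, ← map_sub, hP, map_zero]

theorem span_range_le_of_sum_eval_mul_conj_eq {A : ι → MvPolynomial σ ℂ}
    {B : κ → MvPolynomial σ ℂ}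
    (h : ∀ z w, ∑ i, eval z (A i) * conj (eval w (A i)) = ∑ j, eval z (B j) * conj (eval w (B j))) :
    Submodule.span ℂ (Set.range B) ≤ Submodule.span ℂ (Set.range A) := by
  rw [Submodule.span_le]
  rintro _ ⟨j₀, rfl⟩
  rw [SetLike.mem_coe, ← Subspace.forall_mem_dualAnnihilator_apply_eq_zero_iff]
  intro φ hφ
  have hφA : ∀ i, φ (A i) = 0 := fun i =>
    (Submodule.mem_dualAnnihilator φ).1 hφ _ (Submodule.subset_span ⟨i, rfl⟩)
  have hφB (w : σ → ℂ) : ∑ j, conj (eval w (B j)) * φ (B j) = 0 := by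
    have hAB : ∑ i, conj (eval w (A i)) • A i = ∑ j, conj (eval w (B j)) • B j :=
      funext fun z => by simpa [mul_comm] using h z w
    simpa [hφA] using congr(φ $hAB).symm
  have hB : ∑ j, conj (φ (B j)) • B j = 0 :=
    funext fun z => by simpa [mul_comm] using congr(conj $(hφB z))
  have hnorm : ∑ j, ‖φ (B j)‖ ^ 2 = 0 := by
    have := congr(φ $hB)
    simp only [map_sum, map_smul, smul_eq_mul, Complex.conj_mul', map_zero] at this
    exact_mod_cast this
  rw [Finset.sum_eq_zero_iff_of_nonneg fun _ _ => by positivity] at hnorm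
  simpa using hnorm j₀ (Finset.mem_univ _)

theorem span_range_eq_of_sum_norm_sq_eval_eq {A : ι → MvPolynomial σ ℂ}
    {B : κ → MvPolynomial σ ℂ} (h : ∀ z, ∑ i, ‖eval z (A i)‖ ^ 2 = ∑ j, ‖eval z (B j)‖ ^ 2) :
    Submodule.span ℂ (Set.range A) = Submodule.span ℂ (Set.range B) :=
  le_antisymm
    (span_range_le_of_sum_eval_mul_conj_eq fun z w =>
      (sum_eval_mul_conj_eq_of_sum_norm_sq_eq h z w).symm)
    (span_range_le_of_sum_eval_mul_conj_eq (sum_eval_mul_conj_eq_of_sum_norm_sq_eq h))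

end MvPolynomial

namespace MonomialOrder

variable {σ K : Type*} [Field K] (m : MonomialOrder σ)

def leadingDegrees (W : Submodule K (MvPolynomial σ K)) : Set (σ →₀ ℕ) :=
  {d | ∃ f ∈ W, f ≠ 0 ∧ m.degree f = d}

theorem linearIndependent_of_injective_degree {ι : Type*} {v : ι → MvPolynomial σ K}
    (hv : ∀ i, v i ≠ 0) (hinj : Function.Injective (m.degree ∘ v)) : LinearIndependent K v := by
  classical
  rw [linearIndependent_iff']
  intro s g hsum i hi
  by_contra hgi
  obtain ⟨i₀, hi₀, hmax⟩ := (s.filter (g · ≠ 0)).exists_max_image (m.toSyn ∘ m.degree ∘ v)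
    ⟨i, mem_filter.2 ⟨hi, hgi⟩⟩
  obtain ⟨hi₀s, hgi₀⟩ := mem_filter.1 hi₀
  have hcoeff := congr(coeff (m.degree (v i₀)) $hsum)
  rw [coeff_sum, sum_eq_single i₀, coeff_smul, coeff_zero, smul_eq_mul, mul_eq_zero,
    m.coeff_degree_eq_zero_iff] at hcoeff
  · exact hcoeff.elim hgi₀ (hv i₀)
  · intro j hj hji
    by_cases hgj : g j = 0
    · simp [hgj]
    have hlt : m.degree (v j) ≺[m] m.degree (v i₀) :=
      (hmax j (mem_filter.2 ⟨hj, hgj⟩)).lt_of_ne fun h => hji (hinj (m.toSyn.injective h))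
    rw [coeff_smul, m.coeff_eq_zero_of_lt hlt, smul_zero]
  · exact absurd hi₀s

variable {m} {W : Submodule K (MvPolynomial σ K)}

theorem card_le_finrank_of_subset_leadingDegrees [FiniteDimensional K W] {s : Finset (σ →₀ ℕ)}
    (hs : ↑s ⊆ m.leadingDegrees W) : #s ≤ finrank K W := by
  choose f hfW hf0 hfd using fun d : s => hs d.2
  have hli : LinearIndependent K fun d => (⟨f d, hfW d⟩ : W) :=
    .of_comp W.subtype <| m.linearIndependent_of_injective_degree hf0 fun a b hab =>
      Subtype.ext <| by simpa [hfd] using hab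
  simpa using hli.fintype_card_le_finrank

theorem leadingDegrees_finite [FiniteDimensional K W] : (m.leadingDegrees W).Finite := by
  by_contra h
  obtain ⟨s, hs, hcard⟩ := Set.Infinite.exists_subset_card_eq h (finrank K W + 1)
  have := card_le_finrank_of_subset_leadingDegrees hs
  omega

theorem ncard_leadingDegrees [FiniteDimensional K W] :
    (m.leadingDegrees W).ncard = finrank K W := by
  have hfin : (m.leadingDegrees W).Finite := leadingDegrees_finite
  rw [Set.ncard_eq_toFinset_card _ hfin]
  refine le_antisymm (card_le_finrank_of_subset_leadingDegrees (m := m) (by simp)) ?_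
  let coeffs : W →ₗ[K] hfin.toFinset → K :=
    LinearMap.pi fun d => (lcoeff K d.1).comp W.subtype
  -- a nonzero `f ∈ W` has a nonzero coefficient at its leading degree
  have hinj : Function.Injective coeffs := by
    refine (injective_iff_map_eq_zero coeffs).2 fun f hf => ?_
    by_contra hf0
    have hdeg : m.degree (f : MvPolynomial σ K) ∈ hfin.toFinset :=
      hfin.mem_toFinset.2 ⟨f, f.2, by simpa using hf0, rfl⟩
    exact (m.coeff_degree_ne_zero_iff.2 (by simpa using hf0)) congr($hf ⟨_, hdeg⟩)
  simpa using LinearMap.finrank_le_finrank_of_injective hinj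

theorem degree_add_mem_leadingDegrees {V : Submodule K (MvPolynomial σ K)} {g : MvPolynomial σ K}
    (hg : g ≠ 0) (hVW : V ≤ W.comap (LinearMap.mulLeft K g)) {d : σ →₀ ℕ}
    (hd : d ∈ m.leadingDegrees V) : m.degree g + d ∈ m.leadingDegrees W := by
  obtain ⟨f, hfV, hf0, rfl⟩ := hd
  exact ⟨g * f, hVW hfV, mul_ne_zero hg hf0, m.degree_mul hg hf0⟩

end MonomialOrder

namespace Finsupp

variable {σ : Type*}

theorem eq_of_single_add_eq_single_add {k l k' l' : σ} {a b : σ →₀ ℕ} (hab : a ≠ b)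
    (h : single k 1 + a = single l 1 + b) (h' : single k' 1 + a = single l' 1 + b) : k = k' := by
  classical
  by_contra hk
  have hkl : k ≠ l := by
    rintro rfl
    exact hab (add_left_cancel h)
  have h₁ := DFunLike.congr_fun h k
  have h₂ := DFunLike.congr_fun h' k
  simp only [add_apply, single_eq_same, single_apply, if_neg (Ne.symm hk), if_neg (Ne.symm hkl)]
    at h₁ h₂
  split_ifs at h₂ <;> omega

variable (σ) [Fintype σ] [DecidableEq σ]

noncomputable def unitExponents : Finset (σ →₀ ℕ) :=
  univ.image fun k => single k 1

variable {σ}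

theorem card_unitExponents : #(unitExponents σ) = Fintype.card σ :=
  card_image_of_injective _ (single_left_injective one_ne_zero)

theorem card_inter_unitExponents_add_le_one {a b : σ →₀ ℕ} (hab : a ≠ b) :
    #((unitExponents σ + {a}) ∩ (unitExponents σ + {b})) ≤ 1 := by
  refine card_le_one.2 fun x hx y hy => ?_
  simp only [unitExponents, mem_inter, mem_add, mem_image, mem_univ, true_and, mem_singleton,
    exists_eq_left, exists_exists_eq_and] at hx hy
  obtain ⟨⟨k, rfl⟩, l, hl⟩ := hx
  obtain ⟨⟨k', rfl⟩, l', hl'⟩ := hy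
  rw [eq_of_single_add_eq_single_add hab hl.symm hl'.symm]

theorem card_mul_card_le_card_unitExponents_add (M : Finset (σ →₀ ℕ)) :
    Fintype.card σ * #M ≤ #(unitExponents σ + M) + (#M).choose 2 := by
  induction M using Finset.induction_on with
  | empty => simp
  | insert a M ha ih =>
    have hinter : #((unitExponents σ + {a}) ∩ (unitExponents σ + M)) ≤ #M := by
      calc #((unitExponents σ + {a}) ∩ (unitExponents σ + M))
          ≤ #(M.biUnion fun b => (unitExponents σ + {a}) ∩ (unitExponents σ + {b})) := by
            refine card_le_card fun x hx => ?_
            obtain ⟨hxa, hxM⟩ := mem_inter.1 hx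
            obtain ⟨s, hs, b, hb, rfl⟩ := mem_add.1 hxM
            exact mem_biUnion.2 ⟨b, hb, mem_inter.2 ⟨hxa, add_mem_add hs (mem_singleton_self b)⟩⟩
        _ ≤ #M * 1 := by
            refine card_biUnion_le_card_mul _ _ _ fun b hb => ?_
            have hab : a ≠ b := by rintro rfl; exact ha hb
            exact card_inter_unitExponents_add_le_one hab
        _ = #M := mul_one _
    have hunion := card_union_add_card_inter (unitExponents σ + {a}) (unitExponents σ + M)
    have hS : #(unitExponents σ + {a}) = Fintype.card σ := by
      rw [card_add_singleton, card_unitExponents]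
    have hchoose : (#M + 1).choose 2 = #M + (#M).choose 2 := by
      rw [Nat.choose_succ_succ', Nat.choose_one_right]
    rw [card_insert_of_notMem ha, insert_eq, add_union, hchoose, mul_add_one]
    omega

end Finsupp

namespace MvPolynomial

variable {σ K : Type*} [Fintype σ] [DecidableEq σ] [Field K]

theorem card_mul_finrank_le_finrank_add_choose_two {V W : Submodule K (MvPolynomial σ K)}
    [FiniteDimensional K V] [FiniteDimensional K W]
    (hVW : ∀ k, V ≤ W.comap (LinearMap.mulLeft K (X k))) :
    Fintype.card σ * finrank K V ≤ finrank K W + (finrank K V).choose 2 := by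
  let : LinearOrder σ := IsWellOrder.linearOrder WellOrderingRel
  let m : MonomialOrder σ := .lex
  have hfin : (m.leadingDegrees V).Finite := MonomialOrder.leadingDegrees_finite
  have hsub : ↑(Finsupp.unitExponents σ + hfin.toFinset) ⊆ m.leadingDegrees W := by
    intro x hx
    obtain ⟨_, hk, d, hd, rfl⟩ := mem_add.1 hx
    obtain ⟨k, -, rfl⟩ := mem_image.1 hk
    simpa [m.degree_X] using
      m.degree_add_mem_leadingDegrees (X_ne_zero k) (hVW k) (hfin.mem_toFinset.1 hd)
  have hcount := Finsupp.card_mul_card_le_card_unitExponents_add hfin.toFinset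
  rw [← Set.ncard_eq_toFinset_card _ hfin, MonomialOrder.ncard_leadingDegrees] at hcount
  have := MonomialOrder.card_le_finrank_of_subset_leadingDegrees hsub
  omega

end MvPolynomial

theorem sos_rank_bihomogeneous_low_rank_general
    (n p R : ℕ)
    (F : Fin p → MvPolynomial (Fin (n + 1)) ℂ)
    (H : Fin R → MvPolynomial (Fin (n + 1)) ℂ)
    (hFli : LinearIndependent ℂ F)
    (hHli : LinearIndependent ℂ H)
    (heq : ∀ Z : Fin (n + 1) → ℂ,
      (∑ j, ‖Z j‖ ^ 2) * (∑ i, ‖MvPolynomial.eval Z (F i)‖ ^ 2)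
        = ∑ j, ‖MvPolynomial.eval Z (H j)‖ ^ 2) :
    (n + 1) * p - p * (p - 1) / 2 ≤ R ∧ R ≤ p * (n + 1) := by
  let G : Fin (n + 1) × Fin p → MvPolynomial (Fin (n + 1)) ℂ := fun ki => X ki.1 * F ki.2
  have hspan : Submodule.span ℂ (Set.range G) = Submodule.span ℂ (Set.range H) :=
    span_range_eq_of_sum_norm_sq_eval_eq fun Z => by
      simp only [← heq Z, sum_mul_sum, ← Fintype.sum_prod_type', G, map_mul, eval_X, norm_mul,
        mul_pow]
  have hR : finrank ℂ (Submodule.span ℂ (Set.range G)) = R := by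
    rw [hspan, finrank_span_eq_card hHli, Fintype.card_fin]
  have hXF (k) : Submodule.span ℂ (Set.range F) ≤
      (Submodule.span ℂ (Set.range G)).comap (LinearMap.mulLeft ℂ (X k)) :=
    Submodule.span_le.2 (Set.range_subset_iff.2 fun i => Submodule.subset_span ⟨(k, i), rfl⟩)
  have := FiniteDimensional.span_of_finite ℂ (Set.finite_range F)
  have := FiniteDimensional.span_of_finite ℂ (Set.finite_range G)
  have hlower := card_mul_finrank_le_finrank_add_choose_two hXF
  rw [finrank_span_eq_card hFli, hR, Fintype.card_fin, Fintype.card_fin,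
    Nat.choose_two_right] at hlower
  refine ⟨by omega, ?_⟩
  calc R = finrank ℂ (Submodule.span ℂ (Set.range G)) := hR.symm
    _ ≤ Fintype.card (Fin (n + 1) × Fin p) := finrank_range_le_card G
    _ = p * (n + 1) := by simp [mul_comm]

/-- Proposition 3 of [GrHa13], lower/upper bound case `p ≤ n+1`:
If `A(Z,Z̄) = Σ_{i=1}^p |F_i(Z)|²` with `F_i` linearly independent homogeneous polynomials
of degree `d`, and `‖Z‖² A(Z,Z̄) = Σ_{j=1}^R |H_j(Z)|²` with `H_j` linearly independent
homogeneous of degree `d+1`, and `p ≤ n+1`, then `(n+1)p - p(p-1)/2 ≤ R ≤ p(n+1)`. -/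
theorem sos_rank_bihomogeneous_low_rank
    (n p R d : ℕ)
    (F : Fin p → MvPolynomial (Fin (n + 1)) ℂ)
    (H : Fin R → MvPolynomial (Fin (n + 1)) ℂ)
    (hFhom : ∀ i, (F i).IsHomogeneous d)
    (hHhom : ∀ j, (H j).IsHomogeneous (d + 1))
    (hFli : LinearIndependent ℂ F)
    (hHli : LinearIndependent ℂ H)
    (heq : ∀ Z : Fin (n + 1) → ℂ,
      (∑ j, ‖Z j‖ ^ 2) * (∑ i, ‖MvPolynomial.eval Z (F i)‖ ^ 2)
        = ∑ j, ‖MvPolynomial.eval Z (H j)‖ ^ 2)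
    (hpn : p ≤ n + 1) :
    (n + 1) * p - p * (p - 1) / 2 ≤ R ∧ R ≤ p * (n + 1) :=
  sos_rank_bihomogeneous_low_rank_general n p R F H hFli hHli heq
end

section
/- Let f₁,…,f_p be linearly independent holomorphic functions on a connected open neighborhood Ω of 0 in ℂⁿ with fᵢ(0) = 0 for all i, and suppose (1 + ‖z‖²)·(1 + Σ_{i=1}^p |fᵢ(z)|²) = 1 + Σ_{k=1}^r |hₖ(z)|² on Ω, where h₁,…,h_r are linearly independent holomorphic functions on Ω. If p ≤ n, then n(p+1) − p(p−1)/2 ≤ r ≤ n(p+1) + p. -/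
/-
Expanding the left-hand side, `∑ |h_k|² = ∑ |g_m|²` with `g = (f_i, z_j, z_j f_i)`. Polarization
upgrades this to `∑ h(x) conj h(y) = ∑ g(x) conj g(y)` near `0`: after the substitution
`λ = s + i t`, `μ = s - i t`, a function holomorphic in `λ` and in `μ` that vanishes on
`μ = conj λ` vanishes for real `s, t`, hence identically. So `h` and `g` span the same space of
functions near `0`, in which the `h_k` stay independent by the identity theorem; its dimension
`r` is at most the number `n(p+1) + p` of the `g_m`.

For the lower bound, a relation `∑ c_j z_j + ∑ c_ji z_j f_i = ∑ z_j (c_j + ∑ c_ji f_i) = 0` forces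
`c_j = 0` because `f(0) = 0`, and then `(∑_i c_ji f_i)_j` is a syzygy `∑ z_j F_j = 0` with
entries in `span f`. Syzygies with entries in a `q`-dimensional space `V` form a space of
dimension at most `q(q-1)/2`: at a point `a` where `V` does not vanish identically, the
syzygies with `∑ a_j F_j = 0` have entries vanishing at `a`, so induction applies to
`V ∩ {v(a) = 0}`.
-/

open Set Filter Topology Metric Submodule Module ComplexConjugate Complex

section IdentityTheorem

variable {E F : Type*} [NormedAddCommGroup E] [NormedSpace ℂ E]
  [NormedAddCommGroup F] [NormedSpace ℂ F] [CompleteSpace F] {f : E → F} {U : Set E}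

theorem Convex.eqOn_zero_of_eventuallyEq_zero (hUo : IsOpen U) (hUc : Convex ℝ U)
    (hf : DifferentiableOn ℂ f U) {u : E} (hu : u ∈ U) (hfu : f =ᶠ[𝓝 u] 0) : EqOn f 0 U := by
  intro y hy
  let γ : ℂ → E := fun t => u + t • (y - u)
  have hγ : Continuous γ := by fun_prop
  have hT : Convex ℝ (γ ⁻¹' U) :=
    (hUc.translate_preimage_right u).linear_preimage
      ((LinearMap.toSpanSingleton ℂ E (y - u)).restrictScalars ℝ)
  have hφ : AnalyticOnNhd ℂ (f ∘ γ) (γ ⁻¹' U) :=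
    (hf.comp (by fun_prop) (mapsTo_preimage γ U)).analyticOnNhd (hUo.preimage hγ)
  have h0 : f ∘ γ =ᶠ[𝓝 0] 0 := by
    have hγ0 : Tendsto γ (𝓝 0) (𝓝 u) := by simpa [γ] using hγ.tendsto 0
    exact hγ0.eventually hfu
  simpa [γ] using hφ.eqOn_zero_of_preconnected_of_eventuallyEq_zero hT.isPreconnected
    (by simpa [γ] using hu) h0 (show (1 : ℂ) ∈ γ ⁻¹' U by simpa [γ] using hy)

theorem IsPreconnected.eqOn_zero_of_eventuallyEq_zero (hUo : IsOpen U) (hU : IsPreconnected U)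
    (hf : DifferentiableOn ℂ f U) {u : E} (hu : u ∈ U) (hfu : f =ᶠ[𝓝 u] 0) : EqOn f 0 U := by
  let S := {z | f =ᶠ[𝓝 z] 0}
  have hS : IsOpen S := isOpen_setOfPred_eventually_nhds
  have hclosed : closure S ∩ U ⊆ S := by
    rintro z ⟨hzS, hzU⟩
    obtain ⟨δ, hδ, hball⟩ := Metric.isOpen_iff.1 hUo z hzU
    obtain ⟨w, hwB, hwS⟩ := mem_closure_iff_nhds.1 hzS _ (ball_mem_nhds z hδ)
    have hB : EqOn f 0 (ball z δ) :=
      Convex.eqOn_zero_of_eventuallyEq_zero isOpen_ball (convex_ball z δ) (hf.mono hball) hwB hwS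
    exact eventually_of_mem (ball_mem_nhds z hδ) hB
  intro z hz
  exact (hU.subset_of_closure_inter_subset hS ⟨u, hu, hfu⟩ hclosed hz).self_of_nhds

theorem LinearIndependent.restrict_of_isPreconnected {ι : Type*} [Fintype ι] {u : ι → E → ℂ}
    {V : Set E} (hUo : IsOpen U) (hU : IsPreconnected U) (hu : ∀ i, DifferentiableOn ℂ (u i) U)
    (hVo : IsOpen V) (hVU : V ⊆ U) (hV : V.Nonempty) (hli : LinearIndependent ℂ fun i (z : U) => u i z) :
    LinearIndependent ℂ fun i (z : V) => u i z := by
  rw [Fintype.linearIndependent_iff] at hli ⊢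
  intro c hc
  obtain ⟨v, hv⟩ := hV
  have hzero : (∑ i, c i • u i) =ᶠ[𝓝 v] 0 := by
    filter_upwards [hVo.mem_nhds hv] with z hz
    simpa using congrFun hc ⟨z, hz⟩
  have hU0 := hU.eqOn_zero_of_eventuallyEq_zero hUo
    (DifferentiableOn.sum fun i _ => (hu i).const_smul (c i)) (hVU hv) hzero
  exact hli c (funext fun z => by simpa using hU0 z.2)

end IdentityTheorem

theorem eqOn_zero_of_forall_ofReal {φ : ℂ → ℂ} {r : ℝ} (hφ : DifferentiableOn ℂ φ (ball 0 r))
    (hreal : ∀ t : ℝ, |t| < r → φ t = 0) : EqOn φ 0 (ball 0 r) := by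
  intro z hz
  have hr : 0 < r := pos_of_mem_ball hz
  have hreal' : ∀ᶠ t : ℝ in 𝓝[≠] 0, φ t = 0 :=
    eventually_nhdsWithin_of_eventually_nhds <|
      Filter.mem_of_superset (Ioo_mem_nhds (neg_lt_zero.2 hr) hr) fun t ht => hreal t (abs_lt.2 ht)
  have hofReal : Tendsto ((↑) : ℝ → ℂ) (𝓝[≠] 0) (𝓝[≠] 0) :=
    Complex.continuous_ofReal.continuousWithinAt.tendsto_nhdsWithin fun t ht => by simpa using ht
  exact (hφ.analyticOnNhd isOpen_ball).eqOn_zero_of_preconnected_of_frequently_eq_zero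
    (convex_ball 0 r).isPreconnected (mem_ball_self hr) (hofReal.frequently hreal'.frequently) hz

theorem eq_zero_of_forall_ofReal₂ {G : ℂ → ℂ → ℂ} {r : ℝ}
    (hG₁ : ∀ t ∈ ball (0 : ℂ) r, DifferentiableOn ℂ (fun s => G s t) (ball 0 r))
    (hG₂ : ∀ s ∈ ball (0 : ℂ) r, DifferentiableOn ℂ (G s) (ball 0 r))
    (hreal : ∀ s t : ℝ, |s| < r → |t| < r → G s t = 0) :
    ∀ s ∈ ball (0 : ℂ) r, ∀ t ∈ ball (0 : ℂ) r, G s t = 0 := fun s hs t ht =>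
  eqOn_zero_of_forall_ofReal (hG₂ s hs) (fun t' ht' => eqOn_zero_of_forall_ofReal
    (hG₁ t' (by simpa using ht')) (fun s' hs' => hreal s' t' hs' ht') hs) ht

theorem DifferentiableOn.conj_conj_ball {φ : ℂ → ℂ} {R : ℝ}
    (hφ : DifferentiableOn ℂ φ (ball 0 R)) : DifferentiableOn ℂ (conj ∘ φ ∘ conj) (ball 0 R) := by
  intro z hz
  have hz' : conj z ∈ ball (0 : ℂ) R := by simpa using hz
  simpa using
    ((hφ _ hz').differentiableAt (isOpen_ball.mem_nhds hz')).conj_conj.differentiableWithinAt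

theorem sum_mul_conj_eq_zero_of_forall_diag {ι : Type*} [Fintype ι] {a b : ι → ℂ → ℂ} {R : ℝ}
    (ha : ∀ k, DifferentiableOn ℂ (a k) (ball 0 R)) (hb : ∀ k, DifferentiableOn ℂ (b k) (ball 0 R))
    (hdiag : ∀ z ∈ ball (0 : ℂ) R, ∑ k, a k z * conj (b k z) = 0) :
    ∀ z ∈ ball (0 : ℂ) (R / 2), ∀ w ∈ ball (0 : ℂ) (R / 2), ∑ k, a k z * conj (b k w) = 0 := by
  have hmem : ∀ s ∈ ball (0 : ℂ) (R / 2), ∀ t ∈ ball (0 : ℂ) (R / 2),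
      s + t * I ∈ ball (0 : ℂ) R ∧ s - t * I ∈ ball (0 : ℂ) R := by
    intro s hs t ht
    simp only [mem_ball_zero_iff] at hs ht ⊢
    have hti : ‖t * I‖ = ‖t‖ := by simp
    constructor
    · linarith [norm_add_le s (t * I)]
    · linarith [norm_sub_le s (t * I)]
  -- For real `s` and `t`, `conj (s - t I) = s + t I`, so `G s t` is the diagonal sum at `s + t I`.
  let G : ℂ → ℂ → ℂ := fun s t => ∑ k, a k (s + t * I) * (conj ∘ b k ∘ conj) (s - t * I)
  have hG := eq_zero_of_forall_ofReal₂ (G := G) (r := R / 2)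
    (fun t ht => DifferentiableOn.fun_sum fun k _ =>
      ((ha k).comp (by fun_prop) fun s hs => (hmem s hs t ht).1).mul
        ((hb k).conj_conj_ball.comp (by fun_prop) fun s hs => (hmem s hs t ht).2))
    (fun s hs => DifferentiableOn.fun_sum fun k _ =>
      ((ha k).comp (by fun_prop) fun t ht => (hmem s hs t ht).1).mul
        ((hb k).conj_conj_ball.comp (by fun_prop) fun t ht => (hmem s hs t ht).2))
    (fun s t hs ht => by
      have := hdiag _ (hmem s (by simpa using hs) t (by simpa using ht)).1
      simpa [G, map_sub, map_add, conj_ofReal] using this)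
  intro z hz w hw
  have hs : (z + conj w) / 2 ∈ ball (0 : ℂ) (R / 2) := by
    simp only [mem_ball_zero_iff, norm_div, RCLike.norm_ofNat] at hz hw ⊢
    linarith [norm_add_le z (conj w), Complex.norm_conj w]
  have ht : (z - conj w) / (2 * I) ∈ ball (0 : ℂ) (R / 2) := by
    simp only [mem_ball_zero_iff, norm_div, norm_mul, norm_I, RCLike.norm_ofNat, mul_one] at hz hw ⊢
    linarith [norm_sub_le z (conj w), Complex.norm_conj w]
  convert hG _ hs _ ht using 3 with k
  · congr 1; field_simp; ring
  · simp only [Function.comp_apply]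
    congr 2
    field_simp
    ring_nf
    simp

theorem sum_mul_conj_eq_of_sum_sq_norm_eq {E ι κ : Type*} [NormedAddCommGroup E]
    [NormedSpace ℂ E] [Fintype ι] [Fintype κ] {u : ι → E → ℂ} {v : κ → E → ℂ} {c : E} {R : ℝ}
    (hu : ∀ i, DifferentiableOn ℂ (u i) (ball c R)) (hv : ∀ k, DifferentiableOn ℂ (v k) (ball c R))
    (huv : ∀ x ∈ ball c R, ∑ i, ‖u i x‖ ^ 2 = ∑ k, ‖v k x‖ ^ 2) :
    ∀ x ∈ ball c (R / 7), ∀ y ∈ ball c (R / 7),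
      ∑ i, u i x * conj (u i y) = ∑ k, v k x * conj (v k y) := by
  intro x hx y hy
  let γ : ℂ → E := fun t => y + t • (x - y)
  have hγ : MapsTo γ (ball 0 3) (ball c R) := by
    intro t ht
    rw [mem_ball_zero_iff] at ht
    rw [mem_ball_iff_norm] at hx hy ⊢
    have hxy : ‖x - y‖ ≤ ‖x - c‖ + ‖y - c‖ := by
      simpa using norm_sub_le (x - c) (y - c)
    calc ‖γ t - c‖ = ‖(y - c) + t • (x - y)‖ := by simp only [γ]; abel_nf
      _ ≤ ‖y - c‖ + ‖t‖ * ‖x - y‖ := (norm_add_le _ _).trans (by rw [norm_smul])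
      _ < R := by nlinarith [norm_nonneg t, norm_nonneg (x - y)]
  have hdiff {w : E → ℂ} (hw : DifferentiableOn ℂ w (ball c R)) :
      DifferentiableOn ℂ (w ∘ γ) (ball 0 3) := hw.comp (by fun_prop) hγ
  have h := sum_mul_conj_eq_zero_of_forall_diag (R := 3)
    (a := Sum.elim (fun i => u i ∘ γ) (fun k => v k ∘ γ))
    (b := Sum.elim (fun i => u i ∘ γ) (fun k => -(v k ∘ γ)))
    (Sum.rec (fun i => hdiff (hu i)) (fun k => hdiff (hv k)))
    (Sum.rec (fun i => hdiff (hu i)) (fun k => (hdiff (hv k)).neg))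
    (fun t ht => by
      simp only [Fintype.sum_sum_type, Sum.elim_inl, Sum.elim_inr, Pi.neg_apply, map_neg,
        mul_neg, Finset.sum_neg_distrib, Function.comp_apply, Complex.mul_conj',
        ← Complex.ofReal_pow, ← Complex.ofReal_sum, huv _ (hγ ht), add_neg_cancel])
    1 (by norm_num) 0 (by norm_num)
  simpa [Fintype.sum_sum_type, γ, sub_eq_zero, ← sub_eq_add_neg] using h

theorem span_range_le_of_sum_mul_conj_eq {X ι κ : Type*} [Fintype ι] [Fintype κ]
    {u : ι → X → ℂ} {v : κ → X → ℂ}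
    (huv : ∀ x y, ∑ i, u i x * conj (u i y) = ∑ k, v k x * conj (v k y)) :
    span ℂ (range u) ≤ span ℂ (range v) := by
  classical
  let L : EuclideanSpace ℂ ι →ₗ[ℂ] X → ℂ :=
    Fintype.linearCombination ℂ u ∘ₗ (WithLp.linearEquiv 2 ℂ (ι → ℂ)).toLinearMap
  have hL : ∀ c x, L c x = ∑ i, c i * u i x := fun c x => by
    simp [L, Fintype.linearCombination_apply, Finset.sum_apply]
  -- The span `S` of the conjugated values of `u` is mapped into `span v`, and `L` kills `Sᗮ`.
  let ubar : X → EuclideanSpace ℂ ι := fun y => WithLp.toLp 2 fun i => conj (u i y)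
  let S := span ℂ (range ubar)
  have hS : S.map L ≤ span ℂ (range v) := by
    rw [map_span, span_le]
    rintro _ ⟨_, ⟨y, rfl⟩, rfl⟩
    have : L (ubar y) = ∑ k, conj (v k y) • v k := by
      ext x
      simp only [hL, ubar, Finset.sum_apply, Pi.smul_apply, smul_eq_mul]
      simpa only [mul_comm] using huv x y
    rw [SetLike.mem_coe, this]
    exact sum_mem fun k _ => smul_mem _ _ (subset_span (mem_range_self k))
  have hSperp : Sᗮ ≤ LinearMap.ker L := by
    intro c hc
    ext x
    have := (mem_orthogonal S c).1 hc _ (subset_span (mem_range_self x))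
    simpa [hL, ubar, PiLp.inner_apply, mul_comm] using this
  rw [span_le]
  rintro _ ⟨i, rfl⟩
  obtain ⟨s, hs, s', hs', hss'⟩ :=
    mem_sup.1 (sup_orthogonal_of_hasOrthogonalProjection (K := S) ▸ mem_top :
      EuclideanSpace.single i (1 : ℂ) ∈ S ⊔ Sᗮ)
  have hui : u i = L s + L s' := by
    rw [← map_add, hss']
    ext x
    simp [hL]
  rw [SetLike.mem_coe, hui, LinearMap.mem_ker.1 (hSperp hs'), add_zero]
  exact hS (mem_map_of_mem hs)

section Syzygies

variable {ι : Type*} [Fintype ι]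

theorem apply_eq_zero_of_sum_sub_mul_eventuallyEq_zero {a : ι → ℂ} {F : ι → (ι → ℂ) → ℂ}
    (hF : ∀ j, ContinuousAt (F j) a) (h : ∀ᶠ w in 𝓝 a, ∑ j, (w j - a j) * F j w = 0) (k : ι) :
    F k a = 0 := by
  classical
  let γ : ℂ → ι → ℂ := fun t => a + Pi.single k t
  have hγ : Tendsto γ (𝓝 0) (𝓝 a) :=
    (continuous_const.add (continuous_single k)).tendsto' 0 a (by simp)
  have hline : ∀ t, ∑ j, (γ t j - a j) * F j (γ t) = t * F k (γ t) := fun t => by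
    simp [γ, Pi.single_apply]
  have hzero : ∀ᶠ t in 𝓝[≠] 0, F k (γ t) = 0 := by
    filter_upwards [self_mem_nhdsWithin, nhdsWithin_le_nhds (hγ.eventually h)] with t ht hγt
    exact (mul_eq_zero.1 (hline t ▸ hγt)).resolve_left ht
  exact tendsto_nhds_unique ((hF k).tendsto.comp (hγ.mono_left nhdsWithin_le_nhds))
    (tendsto_const_nhds.congr' (hzero.mono fun t ht => ht.symm))

def syzygies (B : Set (ι → ℂ)) (V : Submodule ℂ ((ι → ℂ) → ℂ)) :
    Submodule ℂ (ι → (ι → ℂ) → ℂ) where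
  carrier := {F | (∀ j, F j ∈ V) ∧ ∀ z ∈ B, ∑ j, z j * F j z = 0}
  add_mem' {F G} hF hG := ⟨fun j => V.add_mem (hF.1 j) (hG.1 j), fun z hz => by
    simp [mul_add, Finset.sum_add_distrib, hF.2 z hz, hG.2 z hz]⟩
  zero_mem' := ⟨fun _ => V.zero_mem, fun _ _ => by simp⟩
  smul_mem' c F hF := ⟨fun j => V.smul_mem c (hF.1 j), fun z hz => by
    simp [mul_left_comm _ c, ← Finset.mul_sum, hF.2 z hz]⟩

variable {B : Set (ι → ℂ)} {V : Submodule ℂ ((ι → ℂ) → ℂ)}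

instance [FiniteDimensional ℂ V] : FiniteDimensional ℂ (syzygies B V) :=
  FiniteDimensional.of_injective
    (LinearMap.pi fun j => ((LinearMap.proj j).comp (syzygies B V).subtype).codRestrict V
      fun F => F.2.1 j)
    fun _ _ h => Subtype.ext (funext fun j => congrArg Subtype.val (congrFun h j))

theorem syzygies_bot : syzygies B ⊥ = ⊥ :=
  eq_bot_iff.2 fun _ hF => (mem_bot ℂ).2 (funext fun j => (mem_bot ℂ).1 (hF.1 j))

theorem finrank_syzygies_le_add (hB : IsOpen B) {a : ι → ℂ} (ha : a ∈ B) [FiniteDimensional ℂ V]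
    (hV : ∀ v ∈ V, ContinuousAt v a) :
    finrank ℂ (syzygies B V) ≤ finrank ℂ (syzygies B (V ⊓ LinearMap.ker (LinearMap.proj a)))
      + finrank ℂ ↥(V ⊓ LinearMap.ker (LinearMap.proj a)) := by
  let Va := V ⊓ LinearMap.ker (LinearMap.proj a)
  let Φ : (ι → (ι → ℂ) → ℂ) →ₗ[ℂ] (ι → ℂ) → ℂ := ∑ j, a j • LinearMap.proj j
  have hΦ : ∀ F, Φ F = ∑ j, a j • F j := fun F => by simp [Φ]
  have hrange : (syzygies B V).map Φ ≤ Va := by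
    rintro _ ⟨F, hF, rfl⟩
    refine ⟨?_, ?_⟩
    · rw [hΦ]
      exact sum_mem fun j _ => V.smul_mem _ (hF.1 j)
    · simpa [hΦ] using hF.2 a ha
  -- `Φ F = 0` turns the syzygy relation into `∑ (w j - a j) F j w = 0`, which forces `F j a = 0`.
  have hker : (LinearMap.ker (Φ.domRestrict (syzygies B V))).map (syzygies B V).subtype ≤
      syzygies B Va := by
    rintro _ ⟨⟨F, hF⟩, hΦF, rfl⟩
    rw [SetLike.mem_coe, LinearMap.mem_ker, LinearMap.domRestrict_apply] at hΦF
    replace hΦF : ∀ w, ∑ j, a j * F j w = 0 := fun w => by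
      simpa [hΦ] using congrFun hΦF w
    have hFa := apply_eq_zero_of_sum_sub_mul_eventuallyEq_zero (fun j => hV _ (hF.1 j))
      (eventually_of_mem (hB.mem_nhds ha) fun w hw => by
        simp only [sub_mul, Finset.sum_sub_distrib, hF.2 w hw, hΦF, sub_self])
    exact ⟨fun j => ⟨hF.1 j, hFa j⟩, hF.2⟩
  have hrn := LinearMap.finrank_range_add_finrank_ker (Φ.domRestrict (syzygies B V))
  rw [LinearMap.range_domRestrict] at hrn
  have h1 := Submodule.finrank_mono hrange
  have h2 := Submodule.finrank_mono hker
  rw [← (Submodule.equivMapOfInjective _ Subtype.val_injective _).finrank_eq] at h2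
  change _ ≤ finrank ℂ (syzygies B Va) + finrank ℂ Va
  omega

theorem finrank_syzygies_le_choose (hB : IsOpen B) (V : Submodule ℂ ((ι → ℂ) → ℂ))
    [FiniteDimensional ℂ V] (hV : ∀ v ∈ V, ContinuousOn v B) (hVB : ∀ v ∈ V, EqOn v 0 B → v = 0) :
    finrank ℂ (syzygies B V) ≤ (finrank ℂ V).choose 2 := by
  induction hq : finrank ℂ V using Nat.strong_induction_on generalizing V with
  | _ q ih =>
  by_cases hbot : V = ⊥
  · rw [hbot, syzygies_bot, finrank_bot]
    exact Nat.zero_le _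
  obtain ⟨v, hvV, hv0⟩ := exists_mem_ne_zero_of_ne_bot hbot
  obtain ⟨a, ha, hva⟩ : ∃ a ∈ B, v a ≠ 0 := by
    by_contra! h
    exact hv0 (hVB v hvV h)
  set Va := V ⊓ LinearMap.ker (LinearMap.proj a)
  have hlt : finrank ℂ Va < q :=
    hq ▸ finrank_lt_finrank_of_lt (lt_of_le_of_ne inf_le_left fun h => hva (h ▸ hvV).2)
  obtain ⟨q, rfl⟩ : ∃ q', q = q' + 1 := ⟨q - 1, by omega⟩
  have hVa := ih _ hlt Va (fun v hv => hV v hv.1) (fun v hv => hVB v hv.1) rfl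
  calc finrank ℂ (syzygies B V) ≤ finrank ℂ (syzygies B Va) + finrank ℂ Va :=
        finrank_syzygies_le_add hB ha fun v hv => (hV v hv).continuousAt (hB.mem_nhds ha)
    _ ≤ q.choose 2 + q := add_le_add (hVa.trans (Nat.choose_le_choose 2 (by omega))) (by omega)
    _ = (q + 1).choose 2 := by rw [Nat.choose_succ_succ', Nat.choose_one_right, add_comm]

end Syzygies

section CoordinateTerms

variable {ι κ : Type*}

def coordinateTerms (f : κ → (ι → ℂ) → ℂ) : ι ⊕ ι × κ → (ι → ℂ) → ℂ :=
  Sum.elim (fun j z => z j) fun jk z => z jk.1 * f jk.2 z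

theorem one_add_sum_sq_norm_mul_one_add_sum_sq_norm_eq [Fintype ι] [Fintype κ]
    (f : κ → (ι → ℂ) → ℂ) (z : ι → ℂ) :
    (1 + ∑ j, ‖z j‖ ^ 2) * (1 + ∑ i, ‖f i z‖ ^ 2) =
      1 + ∑ m, ‖Sum.elim f (coordinateTerms f) m z‖ ^ 2 := by
  simp only [Fintype.sum_sum_type, Sum.elim_inl, Sum.elim_inr, coordinateTerms,
    Fintype.sum_prod_type, norm_mul, mul_pow, ← Finset.sum_mul_sum]
  ring

theorem differentiableOn_coordinateTerms [Fintype ι] {f : κ → (ι → ℂ) → ℂ} {U : Set (ι → ℂ)}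
    (hf : ∀ i, DifferentiableOn ℂ (f i) U) (m : ι ⊕ ι × κ) :
    DifferentiableOn ℂ (coordinateTerms f m) U := by
  rcases m with j | ⟨j, k⟩
  · exact (differentiable_apply j).differentiableOn
  · exact (differentiable_apply j).differentiableOn.mul (hf k)

variable [Fintype ι] [Fintype κ] {B : Set (ι → ℂ)} {f : κ → (ι → ℂ) → ℂ}

theorem finrank_ker_linearCombination_coordinateTerms_le (hB : IsOpen B)
    (h0 : 0 ∈ B) (hf : ∀ i, ContinuousOn (f i) B) (hf0 : ∀ i, f i 0 = 0)
    (hli : LinearIndependent ℂ fun i (z : B) => f i z) :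
    finrank ℂ (LinearMap.ker (Fintype.linearCombination ℂ fun m (z : B) => coordinateTerms f m z))
      ≤ (Fintype.card κ).choose 2 := by
  classical
  set L := Fintype.linearCombination ℂ fun m (z : B) => coordinateTerms f m z
  have hL : ∀ c, c ∈ LinearMap.ker L ↔ ∀ z ∈ B,
      ∑ j, z j * (c (.inl j) + ∑ k, c (.inr (j, k)) * f k z) = 0 := fun c => by
    rw [LinearMap.mem_ker, funext_iff, Subtype.forall]
    refine forall₂_congr fun z _ => ?_
    simp [L, Fintype.linearCombination_apply, Finset.sum_apply, Fintype.sum_sum_type,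
      Fintype.sum_prod_type, coordinateTerms, mul_add, Finset.mul_sum, Finset.sum_add_distrib,
      mul_comm, mul_left_comm, mul_assoc]
  have hfli : LinearIndependent ℂ f :=
    LinearIndependent.of_comp (LinearMap.funLeft ℂ ℂ ((↑) : B → ι → ℂ)) hli
  have hcoord : ∀ c ∈ LinearMap.ker L, ∀ j, c (.inl j) = 0 := fun c hc j => by
    have := apply_eq_zero_of_sum_sub_mul_eventuallyEq_zero (a := 0)
      (F := fun j z => c (.inl j) + ∑ k, c (.inr (j, k)) * f k z)
      (fun j => (continuousOn_const.add (continuousOn_finsetSum _ fun k _ =>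
        continuousOn_const.mul (hf k))).continuousAt (hB.mem_nhds h0))
      (eventually_of_mem (hB.mem_nhds h0) fun z hz => by simpa using (hL c).1 hc z hz) j
    simpa [hf0] using this
  let Θ : (ι ⊕ ι × κ → ℂ) →ₗ[ℂ] ι → (ι → ℂ) → ℂ := LinearMap.pi fun j =>
    Fintype.linearCombination ℂ f ∘ₗ LinearMap.funLeft ℂ ℂ fun k => Sum.inr (j, k)
  have hΘ : ∀ c j, Θ c j = ∑ k, c (.inr (j, k)) • f k := fun c j => by
    simp [Θ, Fintype.linearCombination_apply]
  have hmaps : ∀ c : LinearMap.ker L, Θ c ∈ syzygies B (span ℂ (range f)) := fun ⟨c, hc⟩ =>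
    ⟨fun j => hΘ c j ▸ sum_mem fun k _ => smul_mem _ _ (subset_span (mem_range_self k)),
      fun z hz => by simpa [hΘ, Finset.sum_apply, hcoord c hc] using (hL c).1 hc z hz⟩
  have hinj : Function.Injective ((Θ.domRestrict _).codRestrict _ hmaps) := by
    rw [← LinearMap.ker_eq_bot, eq_bot_iff]
    rintro ⟨c, hc⟩ hΘc
    have hΘc : Θ c = 0 := congrArg Subtype.val (LinearMap.mem_ker.1 hΘc)
    replace hΘc : ∀ j, ∑ k, c (.inr (j, k)) • f k = 0 := fun j => hΘ c j ▸ congrFun hΘc j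
    refine (mem_bot ℂ).2 (Subtype.ext (funext ?_))
    rintro (j | ⟨j, k⟩)
    · exact hcoord c hc j
    · exact Fintype.linearIndependent_iff.1 hfli _ (hΘc j) k
  have := FiniteDimensional.span_of_finite ℂ (finite_range f)
  calc finrank ℂ (LinearMap.ker L)
      ≤ finrank ℂ (syzygies B (span ℂ (range f))) := LinearMap.finrank_le_finrank_of_injective hinj
    _ ≤ (finrank ℂ (span ℂ (range f))).choose 2 := by
      refine finrank_syzygies_le_choose hB _ (fun v hv => ?_) (fun v hv hvB => ?_) <;>
        obtain ⟨c, rfl⟩ := (mem_span_range_iff_exists_fun ℂ).1 hv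
      · simpa only [Finset.sum_fn] using
          continuousOn_finsetSum _ fun i _ => (hf i).const_smul (c i)
      · simp [Fintype.linearIndependent_iff.1 hli c (funext fun z => by
          simpa [Finset.sum_apply] using hvB z.2)]
    _ = (Fintype.card κ).choose 2 := by rw [finrank_span_eq_card hfli]

theorem le_finrank_span_coordinateTerms (hB : IsOpen B) (h0 : 0 ∈ B)
    (hf : ∀ i, ContinuousOn (f i) B) (hf0 : ∀ i, f i 0 = 0)
    (hli : LinearIndependent ℂ fun i (z : B) => f i z) :
    Fintype.card ι + Fintype.card ι * Fintype.card κ - (Fintype.card κ).choose 2 ≤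
      finrank ℂ (span ℂ (range fun m (z : B) => coordinateTerms f m z)) := by
  have hrn := (Fintype.linearCombination ℂ fun m (z : B) => coordinateTerms f m z)
    |>.finrank_range_add_finrank_ker
  rw [Fintype.range_linearCombination, finrank_fintype_fun_eq_card, Fintype.card_sum,
    Fintype.card_prod] at hrn
  have := finrank_ker_linearCombination_coordinateTerms_le hB h0 hf hf0 hli
  omega

end CoordinateTerms

theorem sos_rank_nonhomogeneous_low_rank_general
    (n p r : ℕ) (Ω : Set (Fin n → ℂ))
    (hΩo : IsOpen Ω) (hΩc : IsConnected Ω) (h0Ω : (0 : Fin n → ℂ) ∈ Ω)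
    (f : Fin p → (Fin n → ℂ) → ℂ) (h : Fin r → (Fin n → ℂ) → ℂ)
    (hf : ∀ i, DifferentiableOn ℂ (f i) Ω)
    (hf0 : ∀ i, f i 0 = 0)
    (hh : ∀ k, DifferentiableOn ℂ (h k) Ω)
    (hfli : LinearIndependent ℂ (fun i => fun z : Ω => f i z.1))
    (hhli : LinearIndependent ℂ (fun k => fun z : Ω => h k z.1))
    (heq : ∀ z ∈ Ω,
      (1 + ∑ j, ‖z j‖ ^ 2) * (1 + ∑ i, ‖f i z‖ ^ 2) = 1 + ∑ k, ‖h k z‖ ^ 2) :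
    n * (p + 1) - p * (p - 1) / 2 ≤ r ∧ r ≤ n * (p + 1) + p := by
  obtain ⟨R, hR, hRΩ⟩ := Metric.isOpen_iff.1 hΩo 0 h0Ω
  set B := ball (0 : Fin n → ℂ) (R / 7)
  have hBΩ : B ⊆ Ω := (ball_subset_ball (by linarith)).trans hRΩ
  have hB0 : (0 : Fin n → ℂ) ∈ B := mem_ball_self (by positivity)
  set g := Sum.elim f (coordinateTerms f)
  have hg : ∀ m, DifferentiableOn ℂ (g m) Ω := Sum.rec hf (differentiableOn_coordinateTerms hf)
  have hpol := sum_mul_conj_eq_of_sum_sq_norm_eq (fun k => (hh k).mono hRΩ)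
    (fun m => (hg m).mono hRΩ) fun z hz => by
      linarith [heq z (hRΩ hz), one_add_sum_sq_norm_mul_one_add_sum_sq_norm_eq f z]
  have hspan : span ℂ (range fun k (z : B) => h k z) = span ℂ (range fun m (z : B) => g m z) :=
    le_antisymm (span_range_le_of_sum_mul_conj_eq fun x y => hpol x x.2 y y.2)
      (span_range_le_of_sum_mul_conj_eq fun x y => (hpol x x.2 y y.2).symm)
  have hr : finrank ℂ (span ℂ (range fun m (z : B) => g m z)) = r := by
    rw [← hspan, finrank_span_eq_card (hhli.restrict_of_isPreconnected hΩo hΩc.isPreconnected hh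
      isOpen_ball hBΩ ⟨0, hB0⟩), Fintype.card_fin]
  have := FiniteDimensional.span_of_finite ℂ (finite_range fun m (z : B) => g m z)
  constructor
  · calc n * (p + 1) - p * (p - 1) / 2 = n + n * p - p.choose 2 := by
          rw [Nat.choose_two_right, mul_add_one, add_comm]
      _ ≤ finrank ℂ (span ℂ (range fun m (z : B) => coordinateTerms f m z)) := by
          simpa using le_finrank_span_coordinateTerms isOpen_ball hB0
            (fun i => ((hf i).mono hBΩ).continuousOn) hf0
            (hfli.restrict_of_isPreconnected hΩo hΩc.isPreconnected hf isOpen_ball hBΩ ⟨0, hB0⟩)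
      _ ≤ r := hr ▸ finrank_mono (span_mono (range_subset_iff.2 fun m => ⟨.inr m, rfl⟩))
  · calc r = finrank ℂ (span ℂ (range fun m (z : B) => g m z)) := hr.symm
      _ ≤ Fintype.card (Fin p ⊕ (Fin n ⊕ Fin n × Fin p)) := finrank_range_le_card _
      _ = n * (p + 1) + p := by
          simp only [Fintype.card_sum, Fintype.card_prod, Fintype.card_fin]
          ring

/-- Theorem (nonhomogeneous SOS, low rank): if `f₁,…,f_p` are linearly independent holomorphic
functions near `0 ∈ ℂⁿ` vanishing at `0`, and
`(1+‖z‖²)(1+Σᵢ|fᵢ(z)|²) = 1+Σₖ|hₖ(z)|²` with `h₁,…,h_r` linearly independent holomorphic,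
and `p ≤ n`, then `n(p+1) - p(p-1)/2 ≤ r ≤ n(p+1) + p`. -/
theorem sos_rank_nonhomogeneous_low_rank
    (n p r : ℕ) (Ω : Set (Fin n → ℂ))
    (hΩo : IsOpen Ω) (hΩc : IsConnected Ω) (h0Ω : (0 : Fin n → ℂ) ∈ Ω)
    (f : Fin p → (Fin n → ℂ) → ℂ) (h : Fin r → (Fin n → ℂ) → ℂ)
    (hf : ∀ i, DifferentiableOn ℂ (f i) Ω)
    (hf0 : ∀ i, f i 0 = 0)
    (hh : ∀ k, DifferentiableOn ℂ (h k) Ω)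
    (hfli : LinearIndependent ℂ (fun i => fun z : Ω => f i z.1))
    (hhli : LinearIndependent ℂ (fun k => fun z : Ω => h k z.1))
    (heq : ∀ z ∈ Ω,
      (1 + ∑ j, ‖z j‖ ^ 2) * (1 + ∑ i, ‖f i z‖ ^ 2) = 1 + ∑ k, ‖h k z‖ ^ 2)
    (hpn : p ≤ n) :
    n * (p + 1) - p * (p - 1) / 2 ≤ r ∧ r ≤ n * (p + 1) + p :=
  sos_rank_nonhomogeneous_low_rank_general n p r Ω hΩo hΩc h0Ω f h hf hf0 hh hfli hhli heq
end

section
/- Let f₁,…,f_p be linearly independent holomorphic functions on a connected open neighborhood Ω of 0 in ℂⁿ with fᵢ(0) = 0 for all i, let t be a positive integer, and suppose (1 + Σ_{i=1}^p |fᵢ(z)|²)^t = 1 + Σ_{k=1}^r |hₖ(z)|² on Ω, where h₁,…,h_r are linearly independent holomorphic functions on Ω. Then r ≤ Σ_{k=1}^t C(p+k−1, k), where C(·,·) denotes the binomial coefficient. -/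
/-!
Expanding the power,
`(1 + ∑ᵢ |fᵢ|²)ᵗ - 1 = ∑_{k=1}^t C(t,k) ∑_{m : Fin k → Fin p} |f_{m 1} ⋯ f_{m k}|²`,
so `∑ₖ |hₖ|²` is a positive combination of squared moduli of monomials of degree `1, …, t` in
the `fᵢ`. Such an identity between hermitian sums of holomorphic functions polarizes: if
`∑ⱼ Pⱼ(z) conj(aⱼ(z)) = 0` then `∑ⱼ Pⱼ(z) conj(aⱼ(w)) = 0`, since in one variable differentiating
in the holomorphic direction kills every Taylor coefficient of `z ↦ ∑ⱼ Pⱼ(z) conj(aⱼ(w))` at `w`;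
in several variables one restricts to complex lines and spreads the identity over the connected
domain by the identity theorem. Hence `∑ₖ conj(hₖ(w)) hₖ` lies in the span of the monomials for
every `w`. Because the `hₖ` are linearly independent, the vectors `(conj(hₖ(w)))ₖ` span `ℂʳ`, so
each `hₖ` lies in that span, whose dimension is at most the number `∑_{k=1}^t C(p+k-1,k)` of
monomials.
-/

open Complex ComplexConjugate Filter Set Topology

variable {ι : Type*} [Fintype ι]

namespace Complex

/-- The directional derivatives of `∑ⱼ Pⱼ conj aⱼ` at `x` along `1` and `I` are `A + B` and
`I * (A - B)`, where `A = ∑ⱼ Pⱼ' conj aⱼ` and `B = ∑ⱼ Pⱼ conj aⱼ'`. -/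
theorem sum_deriv_mul_conj_eq_zero {U : Set ℂ} (hU : IsOpen U) {P a : ι → ℂ → ℂ}
    (hP : ∀ j, DifferentiableOn ℂ (P j) U) (ha : ∀ j, DifferentiableOn ℂ (a j) U)
    (hPa : ∀ x ∈ U, ∑ j, P j x * conj (a j x) = 0) {x : ℂ} (hx : x ∈ U) :
    ∑ j, deriv (P j) x * conj (a j x) = 0 := by
  set A := ∑ j, deriv (P j) x * conj (a j x)
  set B := ∑ j, P j x * conj (deriv (a j) x)
  have directional : ∀ c : ℂ, c * A + conj c * B = 0 := by
    intro c
    have hline : HasDerivAt (fun s : ℝ => x + s * c) c 0 := by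
      simpa using ((hasDerivAt_id (0 : ℝ)).ofReal_comp.mul_const c).const_add x
    have hcomp : ∀ {g : ℂ → ℂ}, DifferentiableOn ℂ g U →
        HasDerivAt (fun s : ℝ => g (x + s * c)) (deriv g x * c) 0 := fun hg => by
      have := (hg.differentiableAt (hU.mem_nhds hx)).hasDerivAt
      exact HasDerivAt.comp (0 : ℝ) (by simpa using this) hline
    have hsum : HasDerivAt (fun s : ℝ => ∑ j, P j (x + s * c) * conj (a j (x + s * c)))
        (∑ j, (deriv (P j) x * c * conj (a j x) + P j x * conj (deriv (a j) x * c))) 0 := by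
      refine HasDerivAt.fun_sum fun j _ => ?_
      simpa using (hcomp (hP j)).fun_mul (hcomp (ha j)).star
    have hzero : (fun s : ℝ => ∑ j, P j (x + s * c) * conj (a j (x + s * c))) =ᶠ[𝓝 0] 0 := by
      have hcont : Continuous fun s : ℝ => x + s * c := by fun_prop
      filter_upwards [hcont.continuousAt.preimage_mem_nhds (by simpa using hU.mem_nhds hx)]
        with s hs using hPa _ hs
    have := hsum.unique ((hasDerivAt_const (0 : ℝ) (0 : ℂ)).congr_of_eventuallyEq hzero)
    rw [← this]
    simp only [A, B, Finset.mul_sum, Finset.sum_add_distrib, map_mul]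
    congr 1 <;> exact Finset.sum_congr rfl fun j _ => by ring
  have h1 := directional 1
  have hI := directional I
  simp only [map_one, one_mul, conj_I] at h1 hI
  linear_combination (h1 - I * hI) / 2 + (A - B) / 2 * I_sq

theorem sum_iteratedDeriv_mul_conj_eq_zero {U : Set ℂ} (hU : IsOpen U) {P a : ι → ℂ → ℂ}
    (hP : ∀ j, DifferentiableOn ℂ (P j) U) (ha : ∀ j, DifferentiableOn ℂ (a j) U)
    (hPa : ∀ x ∈ U, ∑ j, P j x * conj (a j x) = 0) (m : ℕ) {x : ℂ} (hx : x ∈ U) :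
    ∑ j, iteratedDeriv m (P j) x * conj (a j x) = 0 := by
  induction m generalizing x with
  | zero => simpa using hPa x hx
  | succ m ih =>
    have hPm : ∀ j, DifferentiableOn ℂ (iteratedDeriv m (P j)) U := fun j => by
      rw [iteratedDeriv_eq_iterate]
      exact (((hP j).analyticOnNhd hU).iterated_deriv m).differentiableOn
    simpa only [iteratedDeriv_succ] using
      sum_deriv_mul_conj_eq_zero hU hPm ha (fun y hy => ih hy) hx

/-- The Taylor coefficients of `z ↦ ∑ⱼ Pⱼ z conj (aⱼ w)` at `w` vanish. -/
theorem sum_mul_conj_eq_zero_of_diag {U : Set ℂ} (hU : IsOpen U) (hUc : IsPreconnected U)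
    {P a : ι → ℂ → ℂ} (hP : ∀ j, DifferentiableOn ℂ (P j) U)
    (ha : ∀ j, DifferentiableOn ℂ (a j) U) (hPa : ∀ x ∈ U, ∑ j, P j x * conj (a j x) = 0)
    {z w : ℂ} (hz : z ∈ U) (hw : w ∈ U) :
    ∑ j, P j z * conj (a j w) = 0 := by
  set G : ℂ → ℂ := fun y => ∑ j, P j y * conj (a j w)
  have hG : DifferentiableOn ℂ G U :=
    DifferentiableOn.fun_sum fun j _ => (hP j).mul_const _
  obtain ⟨ρ, hρ, hball⟩ := Metric.isOpen_iff.mp hU w hw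
  have hG_ball : ∀ y ∈ Metric.ball w ρ, G y = 0 := by
    intro y hy
    have htaylor := hasSum_sum fun j (_ : j ∈ Finset.univ) =>
      (Complex.hasSum_taylorSeries_on_ball ((hP j).mono hball) hy).mul_right (conj (a j w))
    simp only [smul_eq_mul, mul_assoc, ← Finset.mul_sum,
      sum_iteratedDeriv_mul_conj_eq_zero hU hP ha hPa _ hw, mul_zero] at htaylor
    exact htaylor.unique hasSum_zero
  exact (hG.analyticOnNhd hU).eqOn_zero_of_preconnected_of_eventuallyEq_zero hUc hw
    (eventually_of_mem (Metric.ball_mem_nhds w hρ) hG_ball) hz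

end Complex

section NormedSpace

variable {E : Type*} [NormedAddCommGroup E] [NormedSpace ℂ E]

theorem DifferentiableOn.eqOn_zero_of_convex {V : Set E} (hV : Convex ℝ V) (hVo : IsOpen V)
    {φ : E → ℂ} (hφ : DifferentiableOn ℂ φ V) {y : E} (hy : y ∈ V) (hφy : φ =ᶠ[𝓝 y] 0) :
    EqOn φ 0 V := by
  intro q hq
  set L : ℂ → E := fun l => y + l • (q - y)
  have hL : Differentiable ℂ L := by fun_prop
  have hUc : IsPreconnected (L ⁻¹' V) :=
    ((hV.translate_preimage_right y).linear_preimage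
      ((LinearMap.toSpanSingleton ℂ E (q - y)).restrictScalars ℝ)).isPreconnected
  have hφL : (φ ∘ L) =ᶠ[𝓝 0] 0 :=
    (hL.continuous.tendsto' 0 y (by simp [L])).eventually hφy
  simpa [L] using ((hφ.comp hL.differentiableOn (mapsTo_preimage L V)).analyticOnNhd
    (hVo.preimage hL.continuous)).eqOn_zero_of_preconnected_of_eventuallyEq_zero hUc
    (show (0 : ℂ) ∈ L ⁻¹' V by simpa [L] using hy) hφL
    (show (1 : ℂ) ∈ L ⁻¹' V by simpa [L] using hq)

theorem DifferentiableOn.eqOn_zero_of_isPreconnected {Ω : Set E} (hΩo : IsOpen Ω)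
    (hΩc : IsPreconnected Ω) {φ : E → ℂ} (hφ : DifferentiableOn ℂ φ Ω) {x₀ : E} (hx₀ : x₀ ∈ Ω)
    (hφx₀ : φ =ᶠ[𝓝 x₀] 0) : EqOn φ 0 Ω := by
  set S : Set E := {x | φ =ᶠ[𝓝 x] 0}
  have hS : Ω ⊆ S := by
    refine hΩc.subset_of_closure_inter_subset isOpen_setOfPred_eventually_nhds ⟨x₀, hx₀, hφx₀⟩ ?_
    rintro x ⟨hxS, hxΩ⟩
    obtain ⟨ρ, hρ, hball⟩ := Metric.isOpen_iff.mp hΩo x hxΩ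
    obtain ⟨y, hyB, hyS⟩ := mem_closure_iff_nhds.mp hxS _ (Metric.ball_mem_nhds x hρ)
    exact eventually_of_mem (Metric.ball_mem_nhds x hρ)
      ((hφ.mono hball).eqOn_zero_of_convex (convex_ball x ρ) Metric.isOpen_ball hyB hyS)
  exact fun x hx => (hS hx).self_of_nhds

theorem Convex.sum_mul_conj_eq_zero_of_diag {V : Set E} (hV : Convex ℝ V) (hVo : IsOpen V)
    {P a : ι → E → ℂ} (hP : ∀ j, DifferentiableOn ℂ (P j) V)
    (ha : ∀ j, DifferentiableOn ℂ (a j) V) (hPa : ∀ x ∈ V, ∑ j, P j x * conj (a j x) = 0)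
    {z w : E} (hz : z ∈ V) (hw : w ∈ V) :
    ∑ j, P j z * conj (a j w) = 0 := by
  set L : ℂ → E := fun l => z + l • (w - z)
  have hL : Differentiable ℂ L := by fun_prop
  have hUc : IsPreconnected (L ⁻¹' V) :=
    ((hV.translate_preimage_right z).linear_preimage
      ((LinearMap.toSpanSingleton ℂ E (w - z)).restrictScalars ℝ)).isPreconnected
  have hcomp : ∀ {g : E → ℂ}, DifferentiableOn ℂ g V → DifferentiableOn ℂ (g ∘ L) (L ⁻¹' V) :=
    fun hg => hg.comp hL.differentiableOn (mapsTo_preimage L V)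
  simpa [L] using Complex.sum_mul_conj_eq_zero_of_diag (hVo.preimage hL.continuous) hUc
    (fun j => hcomp (hP j)) (fun j => hcomp (ha j)) (fun x hx => hPa (L x) hx)
    (show (0 : ℂ) ∈ L ⁻¹' V by simpa [L] using hz) (show (1 : ℂ) ∈ L ⁻¹' V by simpa [L] using hw)

/-- Near `w` this is the convex case on a ball; the identity theorem extends it in `z`. -/
theorem IsPreconnected.sum_mul_conj_eq_zero_of_diag {Ω : Set E} (hΩc : IsPreconnected Ω)
    (hΩo : IsOpen Ω) {P a : ι → E → ℂ} (hP : ∀ j, DifferentiableOn ℂ (P j) Ω)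
    (ha : ∀ j, DifferentiableOn ℂ (a j) Ω) (hPa : ∀ x ∈ Ω, ∑ j, P j x * conj (a j x) = 0)
    {z w : E} (hz : z ∈ Ω) (hw : w ∈ Ω) :
    ∑ j, P j z * conj (a j w) = 0 := by
  obtain ⟨ρ, hρ, hball⟩ := Metric.isOpen_iff.mp hΩo w hw
  have hnear : ∀ x ∈ Metric.ball w ρ, ∑ j, P j x * conj (a j w) = 0 := fun x hx =>
    (convex_ball w ρ).sum_mul_conj_eq_zero_of_diag Metric.isOpen_ball
      (fun j => (hP j).mono hball) (fun j => (ha j).mono hball)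
      (fun y hy => hPa y (hball hy)) hx (Metric.mem_ball_self hρ)
  exact DifferentiableOn.eqOn_zero_of_isPreconnected hΩo hΩc
    (DifferentiableOn.fun_sum fun j _ => (hP j).mul_const _) hw
    (eventually_of_mem (Metric.ball_mem_nhds w hρ) hnear) hz

theorem IsPreconnected.sum_mul_conj_eq_of_diag {κ : Type*} [Fintype κ] {Ω : Set E}
    (hΩc : IsPreconnected Ω) (hΩo : IsOpen Ω) {P a : ι → E → ℂ} {Q b : κ → E → ℂ}
    (hP : ∀ j, DifferentiableOn ℂ (P j) Ω) (ha : ∀ j, DifferentiableOn ℂ (a j) Ω)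
    (hQ : ∀ k, DifferentiableOn ℂ (Q k) Ω) (hb : ∀ k, DifferentiableOn ℂ (b k) Ω)
    (hdiag : ∀ x ∈ Ω, ∑ j, P j x * conj (a j x) = ∑ k, Q k x * conj (b k x))
    {z w : E} (hz : z ∈ Ω) (hw : w ∈ Ω) :
    ∑ j, P j z * conj (a j w) = ∑ k, Q k z * conj (b k w) := by
  have := hΩc.sum_mul_conj_eq_zero_of_diag hΩo (P := Sum.elim P (-Q)) (a := Sum.elim a b)
    (by simpa [DifferentiableOn.neg] using And.intro hP hQ)
    (by simpa using And.intro ha hb)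
    (fun x hx => by simp [Fintype.sum_sum_type, hdiag x hx]) hz hw
  rw [← sub_eq_zero]
  simpa [Fintype.sum_sum_type, sub_eq_add_neg] using this

end NormedSpace

theorem LinearIndependent.conj_comp {κ X : Type*} {v : κ → X → ℂ} (hv : LinearIndependent ℂ v) :
    LinearIndependent ℂ fun k x => conj (v k x) :=
  hv.map_of_injective_injectiveₛ conj (starAddEquiv (R := X → ℂ)).toAddMonoidHom
    (star_injective (R := ℂ)) (starAddEquiv (R := X → ℂ)).injective
    fun r m => by ext; simp

/-- The coefficient vectors `c` with `∑ₖ cₖ • Hₖ ∈ W` form a subspace containing every `(vₖ x)ₖ`;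
a linear form vanishing on all of these is a linear relation among the `vₖ`, so it is zero. -/
theorem Submodule.mem_of_forall_sum_smul_mem {K M X : Type*} [Field K] [AddCommGroup M]
    [Module K M] {v : ι → X → K} (hv : LinearIndependent K v) {H : ι → M} {W : Submodule K M}
    (hW : ∀ x, ∑ k, v k x • H k ∈ W) (k : ι) : H k ∈ W := by
  classical
  set S : Submodule K (ι → K) := W.comap (Fintype.linearCombination K H)
  have hS : S = ⊤ := by
    by_contra hS
    obtain ⟨φ, hφ, hφS⟩ :=
      Submodule.exists_dual_map_eq_bot_of_lt_top (lt_top_iff_ne_top.mpr hS) inferInstance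
    set d : ι → K := fun i => φ fun j => if i = j then 1 else 0
    have hφd : ∀ c, φ c = ∑ i, c i * d i := fun c => by
      simpa using φ.pi_apply_eq_sum_univ c
    have hd : ∑ i, d i • v i = 0 := by
      funext x
      have hx : φ (fun i => v i x) ∈ S.map φ :=
        mem_map_of_mem (by simpa [S, Fintype.linearCombination_apply] using hW x)
      rw [hφS, Submodule.mem_bot, hφd] at hx
      simpa [mul_comm] using hx
    exact hφ (LinearMap.ext fun c => by
      simp [hφd, Fintype.linearIndependent_iff.mp hv d hd])
  have : (fun j => if k = j then (1 : K) else 0) ∈ S := hS ▸ mem_top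
  simpa [S, Fintype.linearCombination_apply] using this

theorem mem_span_of_sum_mul_conj_eq {κ X : Type*} [Fintype κ] {c : ι → ℂ} {u : ι → X → ℂ}
    {h : κ → X → ℂ} (hh : LinearIndependent ℂ h)
    (hpolar : ∀ z w, ∑ i, c i * u i z * conj (u i w) = ∑ k, h k z * conj (h k w)) (k : κ) :
    h k ∈ Submodule.span ℂ (Set.range u) :=
  Submodule.mem_of_forall_sum_smul_mem hh.conj_comp (fun w => by
    have hw : ∑ k, conj (h k w) • h k = ∑ i, (c i * conj (u i w)) • u i := by
      funext z
      simpa [Finset.sum_apply, mul_comm, mul_left_comm, mul_assoc] using (hpolar z w).symm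
    rw [hw]
    exact Submodule.sum_mem _ fun i _ => Submodule.smul_mem _ _ (Submodule.subset_span ⟨i, rfl⟩)) k

theorem one_add_sum_pow {R : Type*} [CommSemiring R] (x : ι → R) (t : ℕ) :
    (1 + ∑ i, x i) ^ t =
      1 + ∑ km : (k : Fin t) × (Fin (k + 1) → ι), t.choose (km.1 + 1) * ∏ j, x (km.2 j) := by
  rw [add_comm, add_pow, Finset.sum_range_succ', Fintype.sum_sigma, add_comm]
  simp only [one_pow, mul_one, pow_zero, Nat.choose_zero_right, Nat.cast_one, ← Finset.mul_sum,
    ← Fintype.sum_pow]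
  rw [Finset.sum_range (fun k => (∑ i, x i) ^ (k + 1) * (t.choose (k + 1) : R))]
  simp only [mul_comm]

theorem Fintype.card_sigma_sym_succ [DecidableEq ι] (t : ℕ) :
    Fintype.card ((k : Fin t) × Sym ι (k + 1)) =
      ∑ k ∈ Finset.Icc 1 t, (Fintype.card ι + k - 1).choose k := by
  simp only [Fintype.card_sigma, Sym.card_sym_eq_multichoose, Nat.multichoose_eq]
  rw [Fin.sum_univ_eq_sum_range (fun k => (card ι + (k + 1) - 1).choose (k + 1)),
    ← Finset.Ico_add_one_right_eq_Icc, Finset.sum_Ico_eq_sum_range]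
  simp [add_comm]

theorem finrank_span_range_prod_le {K X : Type*} [Field K] (f : ι → X → K) (t : ℕ) :
    Module.finrank K (Submodule.span K (Set.range
        fun km : (k : Fin t) × (Fin (k + 1) → ι) => fun x => ∏ j, f (km.2 j) x)) ≤
      ∑ k ∈ Finset.Icc 1 t, (Fintype.card ι + k - 1).choose k := by
  classical
  set G : (k : Fin t) × Sym ι (k + 1) → X → K := fun s x => (s.2.1.map (f · x)).prod
  have hG : Set.range (fun km : (k : Fin t) × (Fin (k + 1) → ι) => fun x => ∏ j, f (km.2 j) x)
      ⊆ Set.range G := by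
    rintro _ ⟨⟨k, m⟩, rfl⟩
    refine ⟨⟨k, ⟨Finset.univ.val.map m, by simp⟩⟩, funext fun x => ?_⟩
    simp only [G, Multiset.map_map, Finset.prod_eq_multiset_prod]
    rfl
  have := FiniteDimensional.span_of_finite K (Set.finite_range G)
  calc _ ≤ Module.finrank K (Submodule.span K (Set.range G)) :=
        Submodule.finrank_mono (Submodule.span_mono hG)
    _ ≤ _ := finrank_range_le_card G
    _ = _ := Fintype.card_sigma_sym_succ t

theorem sos_rank_power_upper_bound_general
    (n p r t : ℕ) (Ω : Set (Fin n → ℂ))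
    (hΩo : IsOpen Ω) (hΩc : IsConnected Ω)
    (f : Fin p → (Fin n → ℂ) → ℂ) (h : Fin r → (Fin n → ℂ) → ℂ)
    (hf : ∀ i, DifferentiableOn ℂ (f i) Ω)
    (hh : ∀ k, DifferentiableOn ℂ (h k) Ω)
    (hhli : LinearIndependent ℂ (fun k => fun z : Ω => h k z.1))
    (heq : ∀ z ∈ Ω,
      (1 + ∑ i, ‖f i z‖ ^ 2) ^ t = 1 + ∑ k, ‖h k z‖ ^ 2) :
    r ≤ ∑ k ∈ Finset.Icc 1 t, (p + k - 1).choose k := by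
  set u : (k : Fin t) × (Fin (k + 1) → Fin p) → (Fin n → ℂ) → ℂ :=
    fun km z => ∏ j, f (km.2 j) z
  have hdiag : ∀ z ∈ Ω, ∑ km, (t.choose (km.1 + 1) * u km z) * conj (u km z) =
      ∑ k, h k z * conj (h k z) := fun z hz => by
    have := heq z hz
    rw [one_add_sum_pow, add_right_inj] at this
    simp only [mul_assoc, mul_conj', u]
    exact_mod_cast (by simpa [norm_prod, Finset.prod_pow] using this)
  have hu : ∀ km, DifferentiableOn ℂ (u km) Ω := fun km z hz =>
    (HasFDerivWithinAt.finsetProd fun j _ =>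
      (hf (km.2 j) z hz).hasFDerivWithinAt).differentiableWithinAt
  have hmem := mem_span_of_sum_mul_conj_eq hhli fun z w : Ω =>
    hΩc.isPreconnected.sum_mul_conj_eq_of_diag hΩo (fun km => (hu km).const_mul _) hu hh hh
      hdiag z.2 w.2
  have := FiniteDimensional.span_of_finite ℂ (Set.finite_range fun km (z : Ω) => u km z.1)
  calc r = Module.finrank ℂ (Submodule.span ℂ (Set.range fun k (z : Ω) => h k z.1)) := by
        simp [finrank_span_eq_card hhli]
    _ ≤ Module.finrank ℂ (Submodule.span ℂ (Set.range fun km (z : Ω) => u km z.1)) :=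
        Submodule.finrank_mono (Submodule.span_le.mpr (Set.range_subset_iff.mpr hmem))
    _ ≤ _ := by simpa using finrank_span_range_prod_le (fun i (z : Ω) => f i z.1) t

/-- Proposition (rank of powers, upper bound): if `f₁,…,f_p` are linearly independent
holomorphic functions near `0 ∈ ℂⁿ` vanishing at `0`, `t ≥ 1`, and
`(1+Σᵢ|fᵢ(z)|²)^t = 1+Σₖ|hₖ(z)|²` with `h₁,…,h_r` linearly independent holomorphic,
then `r ≤ Σ_{k=1}^t C(p+k-1, k)`. -/
theorem sos_rank_power_upper_bound
    (n p r t : ℕ) (ht : 0 < t) (Ω : Set (Fin n → ℂ))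
    (hΩo : IsOpen Ω) (hΩc : IsConnected Ω) (h0Ω : (0 : Fin n → ℂ) ∈ Ω)
    (f : Fin p → (Fin n → ℂ) → ℂ) (h : Fin r → (Fin n → ℂ) → ℂ)
    (hf : ∀ i, DifferentiableOn ℂ (f i) Ω)
    (hf0 : ∀ i, f i 0 = 0)
    (hh : ∀ k, DifferentiableOn ℂ (h k) Ω)
    (hfli : LinearIndependent ℂ (fun i => fun z : Ω => f i z.1))
    (hhli : LinearIndependent ℂ (fun k => fun z : Ω => h k z.1))
    (heq : ∀ z ∈ Ω,
      (1 + ∑ i, ‖f i z‖ ^ 2) ^ t = 1 + ∑ k, ‖h k z‖ ^ 2) :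
    r ≤ ∑ k ∈ Finset.Icc 1 t, (p + k - 1).choose k :=
  sos_rank_power_upper_bound_general n p r t Ω hΩo hΩc f h hf hh hhli heq
end

section
/- Let p and t be positive integers and let s₁ < s₂ < … < s_p be positive integers. Then the set { α₁s₁ + α₂s₂ + … + α_p s_p : α ∈ ℕ^p, 1 ≤ α₁+…+α_p ≤ t } has cardinality at least tp. -/
/-!
With `M = max s`, the `t * card ι` numbers `a * M + s i` (`a < t`) are sums of `a + 1` terms
`s`, hence weighted sums of total weight in `[1, t]`. They are pairwise distinct because
`0 < s i ≤ M` puts `a * M + s i` in the block `(a * M, (a + 1) * M]`, and `s` is injective.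
-/

section WeightedSums

variable {ι : Type*} [Fintype ι]

def weightedSums (s : ι → ℕ) (t : ℕ) : Set ℕ :=
  {q : ℕ | ∃ α : ι → ℕ, 1 ≤ ∑ i, α i ∧ ∑ i, α i ≤ t ∧ q = ∑ i, α i * s i}

theorem weightedSums_subset_Iic (s : ι → ℕ) (t : ℕ) :
    weightedSums s t ⊆ Set.Iic (t * Finset.univ.sup s) := by
  rintro q ⟨α, -, hαt, rfl⟩
  calc ∑ i, α i * s i ≤ ∑ i, α i * Finset.univ.sup s :=
        Finset.sum_le_sum fun i _ => Nat.mul_le_mul_left _ (Finset.le_sup (Finset.mem_univ i))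
    _ = (∑ i, α i) * Finset.univ.sup s := (Finset.sum_mul _ _ _).symm
    _ ≤ t * Finset.univ.sup s := Nat.mul_le_mul_right _ hαt

theorem weightedSums_finite (s : ι → ℕ) (t : ℕ) : (weightedSums s t).Finite :=
  (Set.finite_Iic _).subset (weightedSums_subset_Iic s t)

theorem mul_add_mem_weightedSums [DecidableEq ι] (s : ι → ℕ) {t a : ℕ} (ha : a < t)
    (i i₀ : ι) : a * s i₀ + s i ∈ weightedSums s t := by
  refine ⟨Pi.single i 1 + Pi.single i₀ a, ?_, ?_, ?_⟩ <;>
    simp only [Pi.add_apply, add_mul, Finset.sum_add_distrib, Pi.single_apply, ite_mul,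
      one_mul, zero_mul, Finset.sum_ite_eq', Finset.mem_univ, if_true]
  · omega
  · omega
  · ring

end WeightedSums

theorem injective_mul_add_of_pos_of_le {ι : Type*} {s : ι → ℕ} (hs : Function.Injective s)
    {M : ℕ} (hpos : ∀ i, 0 < s i) (hle : ∀ i, s i ≤ M) :
    Function.Injective fun x : ℕ × ι => x.1 * M + s x.2 := by
  have block_lt {a b : ℕ} (i j : ι) (hab : a < b) : a * M + s i < b * M + s j :=
    calc a * M + s i ≤ (a + 1) * M := by rw [add_one_mul]; exact Nat.add_le_add_left (hle i) _
      _ ≤ b * M := Nat.mul_le_mul_right _ hab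
      _ < b * M + s j := Nat.lt_add_of_pos_right (hpos j)
  rintro ⟨a, i⟩ ⟨b, j⟩ h
  dsimp only at h
  rcases lt_trichotomy a b with hab | rfl | hab
  · exact absurd h (block_lt i j hab).ne
  · rw [hs (Nat.add_left_cancel h)]
  · exact absurd h (block_lt j i hab).ne'

theorem card_mul_le_ncard_weightedSums {ι : Type*} [Fintype ι] (s : ι → ℕ)
    (hs : Function.Injective s) (hpos : ∀ i, 0 < s i) (t : ℕ) :
    t * Fintype.card ι ≤ (weightedSums s t).ncard := by
  classical
  set M := Finset.univ.sup s
  let f : Fin t × ι → ℕ := fun x => x.1 * M + s x.2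
  have hf : Function.Injective f :=
    (injective_mul_add_of_pos_of_le hs hpos fun i => Finset.le_sup (Finset.mem_univ i)).comp
      (Fin.val_injective.prodMap Function.injective_id)
  have hrange : Set.range f ⊆ weightedSums s t := by
    rintro q ⟨⟨a, i⟩, rfl⟩
    obtain ⟨i₀, -, hi₀⟩ := Finset.exists_mem_eq_sup Finset.univ ⟨i, Finset.mem_univ i⟩ s
    simpa only [f, M, hi₀] using mul_add_mem_weightedSums s a.isLt i i₀
  calc t * Fintype.card ι = Nat.card (Fin t × ι) := by simp
    _ = (Set.range f).ncard := by rw [← Nat.card_coe_set_eq, Nat.card_range_of_injective hf]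
    _ ≤ (weightedSums s t).ncard := Set.ncard_le_ncard hrange (weightedSums_finite s t)

theorem card_weighted_sums_ge_general (p t : ℕ)
    (s : Fin p → ℕ) (hs0 : ∀ i, 0 < s i) (hmono : StrictMono s) :
    t * p ≤ Set.ncard {q : ℕ | ∃ α : Fin p → ℕ,
      1 ≤ ∑ i, α i ∧ ∑ i, α i ≤ t ∧ q = ∑ i, α i * s i} := by
  have h := card_mul_le_ncard_weightedSums s hmono.injective hs0 t
  rwa [Fintype.card_fin] at h

/-- Counting step in the proof of Proposition 2.5: for positive integers `p`, `t` and
strictly increasing positive integers `s₁ < … < s_p`, the set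
`{ α₁s₁ + ⋯ + α_p s_p : α ∈ ℕ^p, 1 ≤ |α| ≤ t }` has at least `tp` elements. -/
theorem card_weighted_sums_ge (p t : ℕ) (hp : 0 < p) (ht : 0 < t)
    (s : Fin p → ℕ) (hs0 : ∀ i, 0 < s i) (hmono : StrictMono s) :
    t * p ≤ Set.ncard {q : ℕ | ∃ α : Fin p → ℕ,
      1 ≤ ∑ i, α i ∧ ∑ i, α i ≤ t ∧ q = ∑ i, α i * s i} :=
  card_weighted_sums_ge_general p t s hs0 hmono
end

section
/- Let h = (h₁,…,h_m) and h̃ = (h̃₁,…,h̃_m) be holomorphic mappings from a connected open set Ω ⊆ ℂⁿ to ℂ^m, each with linearly independent components, such that Σ_{k=1}^m |hₖ(z)|² = Σ_{k=1}^m |h̃ₖ(z)|² for all z ∈ Ω. Then there exists a unitary m×m matrix U such that h(z) = U·h̃(z) for all z ∈ Ω. -/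
/-!
For holomorphic `aⱼ, bⱼ` the sum `Σⱼ aⱼ(z) conj (bⱼ(w))` is holomorphic in `z` and
antiholomorphic in `w`, so if it vanishes on the diagonal it vanishes identically. Along a complex
line this is Wirtinger calculus: `∂/∂z` does not see the antiholomorphic factor, so every
`z`-derivative of the sum vanishes on the diagonal and hence so does its Taylor expansion in `z`;
the identity theorem on the connected set `Ω` does the rest. Applied to `Σ|hₖ|² - Σ|h̃ₖ|²`, this
shows that the vectors `h(z)` and `h̃(z)` have the same Gram matrix, and since the values of `h̃`
span `ℂᵐ`, the assignment `h̃(z) ↦ h(z)` extends to a unitary map.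
-/

open scoped Topology InnerProductSpace
open ComplexConjugate Filter Matrix

section LinearAlgebra

variable {𝕜 E F ι : Type*} [RCLike 𝕜] [NormedAddCommGroup E] [InnerProductSpace 𝕜 E]
  [NormedAddCommGroup F] [InnerProductSpace 𝕜 F]

theorem inner_linearCombination_eq_of_inner_eq {v : ι → E} {w : ι → F}
    (hvw : ∀ i j, ⟪v i, v j⟫_𝕜 = ⟪w i, w j⟫_𝕜) (c d : ι →₀ 𝕜) :
    ⟪Finsupp.linearCombination 𝕜 v c, Finsupp.linearCombination 𝕜 v d⟫_𝕜 =
      ⟪Finsupp.linearCombination 𝕜 w c, Finsupp.linearCombination 𝕜 w d⟫_𝕜 := by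
  simp [Finsupp.linearCombination_apply, Finsupp.sum_inner, Finsupp.inner_sum, inner_smul_left,
    inner_smul_right, hvw]

theorem exists_linearIsometry_apply_eq_of_inner_eq {v : ι → E} {w : ι → F}
    (hvw : ∀ i j, ⟪v i, v j⟫_𝕜 = ⟪w i, w j⟫_𝕜) (hw : Submodule.span 𝕜 (Set.range w) = ⊤) :
    ∃ U : F →ₗᵢ[𝕜] E, ∀ i, U (w i) = v i := by
  obtain ⟨s, hs⟩ := (Finsupp.linearCombination 𝕜 w).exists_rightInverse_of_surjective
    (by rw [Finsupp.range_linearCombination, hw])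
  have hws : ∀ x, Finsupp.linearCombination 𝕜 w (s x) = x := fun x => LinearMap.congr_fun hs x
  refine ⟨((Finsupp.linearCombination 𝕜 v).comp s).isometryOfInner fun x y => ?_, fun i => ?_⟩
  · simp only [LinearMap.comp_apply, inner_linearCombination_eq_of_inner_eq hvw, hws]
  · -- `s (w i) - single i 1` is killed by `linearCombination w`, hence by `linearCombination v`
    set c := s (w i) - Finsupp.single i 1
    have hc : Finsupp.linearCombination 𝕜 w c = 0 := by simp [c, hws]
    have : Finsupp.linearCombination 𝕜 v c = 0 := by
      rw [← inner_self_eq_zero (𝕜 := 𝕜), inner_linearCombination_eq_of_inner_eq hvw, hc,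
        inner_zero_left]
    simpa [c, sub_eq_zero] using this

end LinearAlgebra

theorem LinearIsometry.exists_unitaryGroup_mulVec_eq {𝕜 ι : Type*} [RCLike 𝕜] [Fintype ι]
    [DecidableEq ι] (U : EuclideanSpace 𝕜 ι →ₗᵢ[𝕜] EuclideanSpace 𝕜 ι) :
    ∃ M : Matrix.unitaryGroup ι 𝕜, ∀ x : ι → 𝕜,
      (M : Matrix ι ι 𝕜) *ᵥ x = U (WithLp.toLp 2 x) := by
  set b := EuclideanSpace.basisFun ι 𝕜
  refine ⟨⟨_, (U.toLinearIsometryEquiv rfl).toMatrix_mem_unitaryGroup b b⟩, fun x => ?_⟩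
  exact LinearMap.toMatrix_mulVec_repr b.toBasis b.toBasis U.toLinearMap (WithLp.toLp 2 x)

theorem span_range_eq_top_of_linearIndependent {K ι : Type*} [Field K] {m : ℕ}
    {v : ι → Fin m → K} (hv : LinearIndependent K fun k i => v i k) :
    Submodule.span K (Set.range v) = ⊤ := by
  by_contra hne
  obtain ⟨φ, hφ, hle⟩ := (Submodule.span K (Set.range v)).exists_le_ker_of_lt_top
    (lt_top_iff_ne_top.mpr hne)
  have hφv : ∀ i, φ (v i) = 0 := fun i => hle (Submodule.subset_span ⟨i, rfl⟩)
  have hφe : ∀ k, φ (Pi.single k 1) = 0 := by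
    refine Fintype.linearIndependent_iff.mp hv _ (funext fun i => ?_)
    have hsingle : ∀ k : Fin m, (fun j => if k = j then (1 : K) else 0) = Pi.single k 1 := fun k =>
      funext fun j => by simp [Pi.single_apply, eq_comm]
    simpa [φ.pi_apply_eq_sum_univ (v i), hsingle, mul_comm] using hφv i
  exact hφ (LinearMap.pi_ext' fun k => LinearMap.ext_ring (hφe k))

theorem hasDerivAt_mul_conj_comp_line {g β : ℂ → ℂ} {l : ℂ} (hg : DifferentiableAt ℂ g l)
    (hβ : DifferentiableAt ℂ β l) (t : ℂ) :
    HasDerivAt (fun s : ℝ => g (l + s * t) * conj (β (l + s * t)))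
      (deriv g l * t * conj (β l) + g l * conj (deriv β l * t)) 0 := by
  have hline : HasDerivAt (fun x : ℂ => l + x * t) t ((0 : ℝ) : ℂ) := by
    simpa using ((hasDerivAt_id (0 : ℂ)).mul_const t).const_add l
  have hl : l + ((0 : ℝ) : ℂ) * t = l := by simp
  have hg' := (hg.hasDerivAt.comp_of_eq _ hline hl.symm).comp_ofReal
  have hβ' := (hβ.hasDerivAt.comp_of_eq _ hline hl.symm).comp_ofReal.star
  simpa [hl] using hg'.fun_mul hβ'

theorem sum_deriv_mul_conj_eq_zero {ι : Type*} [Fintype ι] {g β : ι → ℂ → ℂ} {l : ℂ}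
    (hg : ∀ j, DifferentiableAt ℂ (g j) l) (hβ : ∀ j, DifferentiableAt ℂ (β j) l)
    (h0 : ∀ᶠ x in 𝓝 l, ∑ j, g j x * conj (β j x) = 0) :
    ∑ j, deriv (g j) l * conj (β j l) = 0 := by
  set X := ∑ j, deriv (g j) l * conj (β j l)
  set Y := ∑ j, g j l * conj (deriv (β j) l)
  -- the real derivative of the vanishing sum along `s ↦ l + s * t` is `X * t + Y * conj t`;
  -- `t = 1` and `t = I` give `X + Y = 0` and `X - Y = 0`
  have key : ∀ t : ℂ, X * t + Y * conj t = 0 := by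
    intro t
    have hderiv := HasDerivAt.fun_sum (u := Finset.univ) fun j _ =>
      hasDerivAt_mul_conj_comp_line (hg j) (hβ j) t
    have hline : Tendsto (fun s : ℝ => l + s * t) (𝓝 0) (𝓝 l) := by
      have : Continuous fun s : ℝ => l + s * t := by fun_prop
      simpa using this.tendsto 0
    have hzero : HasDerivAt (fun s : ℝ => ∑ j, g j (l + s * t) * conj (β j (l + s * t))) 0 0 :=
      (hasDerivAt_const (0 : ℝ) (0 : ℂ)).congr_of_eventuallyEq (hline.eventually h0)
    rw [← hderiv.unique hzero]
    simp only [X, Y, Finset.sum_mul, ← Finset.sum_add_distrib, map_mul]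
    exact Finset.sum_congr rfl fun j _ => by ring
  have h1 := key 1
  have hI := key Complex.I
  simp only [mul_one, map_one, Complex.conj_I] at h1 hI
  linear_combination (h1 - Complex.I * hI) / 2 + (X - Y) / 2 * Complex.I_sq

theorem sum_iteratedDeriv_mul_conj_eq_zero {ι : Type*} [Fintype ι] {D : Set ℂ} (hD : IsOpen D)
    {g β : ι → ℂ → ℂ} (hg : ∀ j, DifferentiableOn ℂ (g j) D)
    (hβ : ∀ j, DifferentiableOn ℂ (β j) D) (h0 : ∀ l ∈ D, ∑ j, g j l * conj (β j l) = 0)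
    (k : ℕ) : ∀ l ∈ D, ∑ j, iteratedDeriv k (g j) l * conj (β j l) = 0 := by
  induction k with
  | zero => simpa using h0
  | succ k ih =>
    intro l hl
    simp only [iteratedDeriv_succ]
    refine sum_deriv_mul_conj_eq_zero (fun j => ?_)
      (fun j => (hβ j).differentiableAt (hD.mem_nhds hl)) (eventually_of_mem (hD.mem_nhds hl) ih)
    rw [iteratedDeriv_eq_iterate]
    exact (((hg j).analyticOnNhd hD).iterated_deriv k l hl).differentiableAt

section Slices

variable {E F : Type*} [NormedAddCommGroup E] [NormedSpace ℂ E] [NormedAddCommGroup F]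
  [NormedSpace ℂ F] [CompleteSpace F]

theorem DifferentiableOn.eq_zero_of_segment_subset {f : E → F} {U : Set E} (hU : IsOpen U)
    (hf : DifferentiableOn ℂ f U) {x y : E} (hxy : segment ℝ x y ⊆ U)
    (h0 : (fun l : ℂ => f (x + l • (y - x))) =ᶠ[𝓝 0] 0) : f y = 0 := by
  set γ : ℂ → E := fun l => x + l • (y - x)
  have hγ : Differentiable ℂ γ := by fun_prop
  have hseg : segment ℝ (0 : ℂ) 1 ⊆ γ ⁻¹' U := by
    rw [segment_eq_image']
    rintro _ ⟨θ, hθ, rfl⟩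
    apply hxy
    rw [segment_eq_image']
    exact ⟨θ, hθ, by simp [γ, Complex.real_smul]⟩
  have hfγ : AnalyticOnNhd ℂ (f ∘ γ) (γ ⁻¹' U) :=
    (hf.comp hγ.differentiableOn fun _ h => h).analyticOnNhd (hU.preimage hγ.continuous)
  simpa [γ] using (hfγ.mono hseg).eqOn_zero_of_preconnected_of_eventuallyEq_zero
    (convex_segment _ _).isPreconnected (left_mem_segment ℝ _ _) h0 (right_mem_segment ℝ _ _)

theorem DifferentiableOn.eqOn_zero_of_preconnected_of_eventuallyEq_zero {f : E → F} {U : Set E}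
    (hU : IsOpen U) (hc : IsPreconnected U) (hf : DifferentiableOn ℂ f U) {x : E} (hx : x ∈ U)
    (h0 : f =ᶠ[𝓝 x] 0) : Set.EqOn f 0 U := by
  set S := {z | f =ᶠ[𝓝 z] 0}
  have hS : IsOpen S := isOpen_setOfPred_eventually_nhds
  suffices closure S ∩ U ⊆ S from
    fun y hy => (hc.subset_of_closure_inter_subset hS ⟨x, hx, h0⟩ this hy).eq_of_nhds
  rintro z ⟨hzS, hzU⟩
  obtain ⟨r, hr, hball⟩ := Metric.isOpen_iff.mp hU z hzU
  obtain ⟨s, hs, hsS⟩ := mem_closure_iff_nhds.mp hzS _ (Metric.ball_mem_nhds z hr)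
  refine eventually_of_mem (Metric.ball_mem_nhds z hr) fun y hy =>
    hf.eq_zero_of_segment_subset hU (((convex_ball z r).segment_subset hs hy).trans hball) ?_
  have : Continuous fun l : ℂ => s + l • (y - s) := by fun_prop
  exact (this.tendsto' 0 s (by simp)).eventually hsS

variable {ι : Type*} [Fintype ι]

theorem sum_mul_conj_eq_zero_of_segment_subset {U : Set E} (hU : IsOpen U)
    {a b : ι → E → ℂ} (ha : ∀ j, DifferentiableOn ℂ (a j) U) (hb : ∀ j, DifferentiableOn ℂ (b j) U)
    (h0 : ∀ z ∈ U, ∑ j, a j z * conj (b j z) = 0) {x y : E} (hxy : segment ℝ x y ⊆ U) :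
    ∑ j, a j y * conj (b j x) = 0 := by
  set γ : ℂ → E := fun l => x + l • (y - x)
  have hγ : Differentiable ℂ γ := by fun_prop
  have hD : IsOpen (γ ⁻¹' U) := hU.preimage hγ.continuous
  have hx : (0 : ℂ) ∈ γ ⁻¹' U := by simpa [γ] using hxy (left_mem_segment ℝ x y)
  have haγ : ∀ j, DifferentiableOn ℂ (a j ∘ γ) (γ ⁻¹' U) := fun j =>
    (ha j).comp hγ.differentiableOn fun _ h => h
  have hbγ : ∀ j, DifferentiableOn ℂ (b j ∘ γ) (γ ⁻¹' U) := fun j =>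
    (hb j).comp hγ.differentiableOn fun _ h => h
  have hderiv : ∀ k, ∑ j, iteratedDeriv k (a j ∘ γ) 0 * conj (b j x) = 0 := fun k => by
    simpa [γ] using sum_iteratedDeriv_mul_conj_eq_zero hD haγ hbγ (fun l hl => h0 _ hl) k 0 hx
  obtain ⟨r, hr, hball⟩ := Metric.isOpen_iff.mp hD 0 hx
  refine (DifferentiableOn.fun_sum fun j _ => (ha j).mul_const _).eq_zero_of_segment_subset hU hxy
    (eventually_of_mem (Metric.ball_mem_nhds 0 hr) fun l hl => ?_)
  have htaylor := hasSum_sum fun j (_ : j ∈ Finset.univ) =>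
    (Complex.hasSum_taylorSeries_on_ball ((haγ j).mono hball) hl).mul_right (conj (b j x))
  simp only [smul_eq_mul, sub_zero, mul_assoc, ← Finset.mul_sum, hderiv, mul_zero] at htaylor
  exact htaylor.unique hasSum_zero

theorem sum_mul_conj_eq_zero_of_isPreconnected {U : Set E} (hU : IsOpen U)
    (hc : IsPreconnected U) {a b : ι → E → ℂ} (ha : ∀ j, DifferentiableOn ℂ (a j) U)
    (hb : ∀ j, DifferentiableOn ℂ (b j) U) (h0 : ∀ z ∈ U, ∑ j, a j z * conj (b j z) = 0)
    {x y : E} (hx : x ∈ U) (hy : y ∈ U) : ∑ j, a j y * conj (b j x) = 0 := by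
  obtain ⟨r, hr, hball⟩ := Metric.isOpen_iff.mp hU x hx
  have hF : DifferentiableOn ℂ (fun z => ∑ j, a j z * conj (b j x)) U :=
    DifferentiableOn.fun_sum fun j _ => (ha j).mul_const _
  refine hF.eqOn_zero_of_preconnected_of_eventuallyEq_zero hU hc hx
    (eventually_of_mem (Metric.ball_mem_nhds x hr) fun z hz => ?_) hy
  exact sum_mul_conj_eq_zero_of_segment_subset hU ha hb h0
    (((convex_ball x r).segment_subset (Metric.mem_ball_self hr) hz).trans hball)

theorem sum_mul_conj_eq_of_sum_norm_sq_eq {U : Set E} (hU : IsOpen U) (hc : IsPreconnected U)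
    {a a' : ι → E → ℂ} (ha : ∀ j, DifferentiableOn ℂ (a j) U)
    (ha' : ∀ j, DifferentiableOn ℂ (a' j) U)
    (heq : ∀ z ∈ U, ∑ j, ‖a j z‖ ^ 2 = ∑ j, ‖a' j z‖ ^ 2) {x y : E} (hx : x ∈ U) (hy : y ∈ U) :
    ∑ j, a j y * conj (a j x) = ∑ j, a' j y * conj (a' j x) := by
  have key := sum_mul_conj_eq_zero_of_isPreconnected hU hc (a := Sum.elim a a')
    (b := Sum.elim a (-a')) (by rintro (j | j) <;> simp [ha, ha'])
    (by rintro (j | j) <;> simp [ha, (ha' _).neg]) (fun z hz => ?_) hx hy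
  · simp only [Fintype.sum_sum_type, Sum.elim_inl, Sum.elim_inr, Pi.neg_apply, map_neg, mul_neg,
      Finset.sum_neg_distrib] at key
    linear_combination key
  · simp only [Fintype.sum_sum_type, Sum.elim_inl, Sum.elim_inr, Pi.neg_apply, map_neg, mul_neg,
      Finset.sum_neg_distrib, Complex.mul_conj']
    exact_mod_cast sub_eq_zero.mpr (heq z hz)

end Slices

open Matrix in
theorem dAngelo_unitary_uniqueness_general
    (n m : ℕ) (Ω : Set (Fin n → ℂ))
    (hΩo : IsOpen Ω) (hΩc : IsConnected Ω)
    (h h' : Fin m → (Fin n → ℂ) → ℂ)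
    (hh : ∀ k, DifferentiableOn ℂ (h k) Ω)
    (hh' : ∀ k, DifferentiableOn ℂ (h' k) Ω)
    (hli' : LinearIndependent ℂ (fun k => fun z : Ω => h' k z.1))
    (heq : ∀ z ∈ Ω, ∑ k, ‖h k z‖ ^ 2 = ∑ k, ‖h' k z‖ ^ 2) :
    ∃ U : Matrix.unitaryGroup (Fin m) ℂ,
      ∀ z ∈ Ω, (fun k => h k z) =
        (U : Matrix (Fin m) (Fin m) ℂ) *ᵥ (fun k => h' k z) := by
  set v : Ω → EuclideanSpace ℂ (Fin m) := fun z => WithLp.toLp 2 fun k => h k z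
  set v' : Ω → EuclideanSpace ℂ (Fin m) := fun z => WithLp.toLp 2 fun k => h' k z
  have hgram : ∀ z w, ⟪v z, v w⟫_ℂ = ⟪v' z, v' w⟫_ℂ := fun z w => by
    simpa [v, v', PiLp.inner_apply, mul_comm] using
      sum_mul_conj_eq_of_sum_norm_sq_eq hΩo hΩc.isPreconnected hh hh' heq z.2 w.2
  have hspan : Submodule.span ℂ (Set.range v') = ⊤ := by
    rw [show v' = (WithLp.linearEquiv 2 ℂ (Fin m → ℂ)).symm ∘ fun (z : Ω) k => h' k z from rfl,
      Set.range_comp, ← LinearEquiv.coe_coe, Submodule.span_image,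
      span_range_eq_top_of_linearIndependent hli', Submodule.map_top, LinearEquiv.range]
  obtain ⟨U, hU⟩ := exists_linearIsometry_apply_eq_of_inner_eq hgram hspan
  obtain ⟨M, hM⟩ := U.exists_unitaryGroup_mulVec_eq
  exact ⟨M, fun z hz => by rw [hM, hU ⟨z, hz⟩]⟩

open Matrix in
/-- D'Angelo's lemma (uniqueness up to a unitary matrix): if `h` and `h̃` are holomorphic
mappings `Ω → ℂᵐ` on a connected open set `Ω ⊆ ℂⁿ`, each with linearly independent components,
and `Σₖ|hₖ(z)|² = Σₖ|h̃ₖ(z)|²` on `Ω`, then `h = U·h̃` for some unitary `m×m` matrix `U`. -/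
theorem dAngelo_unitary_uniqueness
    (n m : ℕ) (Ω : Set (Fin n → ℂ))
    (hΩo : IsOpen Ω) (hΩc : IsConnected Ω)
    (h h' : Fin m → (Fin n → ℂ) → ℂ)
    (hh : ∀ k, DifferentiableOn ℂ (h k) Ω)
    (hh' : ∀ k, DifferentiableOn ℂ (h' k) Ω)
    (hli : LinearIndependent ℂ (fun k => fun z : Ω => h k z.1))
    (hli' : LinearIndependent ℂ (fun k => fun z : Ω => h' k z.1))
    (heq : ∀ z ∈ Ω, ∑ k, ‖h k z‖ ^ 2 = ∑ k, ‖h' k z‖ ^ 2) :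
    ∃ U : Matrix.unitaryGroup (Fin m) ℂ,
      ∀ z ∈ Ω, (fun k => h k z) =
        (U : Matrix (Fin m) (Fin m) ℂ) *ᵥ (fun k => h' k z) :=
  dAngelo_unitary_uniqueness_general n m Ω hΩo hΩc h h' hh hh' hli' heq
end

section
/- Let Ω ⊆ ℂⁿ be a connected open neighborhood of 0, let f = (f₁,…,f_d) and h = (h₁,…,h_m) be holomorphic mappings on Ω with f(0) = 0 and h(0) = 0, and let φ be a holomorphic function on Ω such that (1 + ‖z‖²)·(1 + Σ_{i=1}^d |fᵢ(z)|²) = (1 + Σ_{k=1}^m |hₖ(z)|²)·e^{φ(z) + conj(φ(z))} for all z ∈ Ω. Then φ(z) + conj(φ(z)) = 0 for all z ∈ Ω, and hence (1 + ‖z‖²)·(1 + Σ_{i=1}^d |fᵢ(z)|²) = 1 + Σ_{k=1}^m |hₖ(z)|² on Ω. -/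
/-!
Both sides of the identity are sums of squared moduli of holomorphic functions: expanding the
products, the left side is `Σ |Aₚ|²` with `Aₚ ∈ {1, zⱼ, fᵢ, zⱼ fᵢ}` and the right side is
`Σ |B_o|²` with `B_o ∈ {e^φ, hₖ e^φ}`. Restricted to a complex line `t ↦ t z` through `0`,
`Σ Aₚ(s z) conj (Aₚ(conj t z)) - Σ B_o(s z) conj (B_o(conj t z))` is holomorphic in `(s, t)` and
vanishes for `t = conj s`, hence everywhere (polarization). At `(s, t) = (1, 0)` the normalizations
`f(0) = 0`, `h(0) = 0` leave `1 = e^{φ(z)} conj (e^{φ(0)})` near `0`, so on all of `Ω` by the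
identity principle, and taking moduli at `z` and at `0` gives `Re φ = 0`.
-/

open Complex Filter Metric Set Topology
open scoped ComplexConjugate

section IdentityPrinciple

variable {E F : Type*} [NormedAddCommGroup E] [NormedSpace ℂ E]
  [NormedAddCommGroup F] [NormedSpace ℂ F] [CompleteSpace F] {f g : E → F}

theorem Convex.eqOn_of_eventuallyEq {s : Set E} (hs : Convex ℝ s) (hso : IsOpen s)
    (hf : DifferentiableOn ℂ f s) (hg : DifferentiableOn ℂ g s) {y : E} (hy : y ∈ s)
    (hfg : f =ᶠ[𝓝 y] g) : EqOn f g s := by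
  intro w hw
  let L : ℂ → E := fun t => y + t • (w - y)
  have hL : Differentiable ℂ L := by fun_prop
  have hDo : IsOpen (L ⁻¹' s) := hso.preimage hL.continuous
  have hDc : Convex ℝ (L ⁻¹' s) := by
    intro t₁ ht₁ t₂ ht₂ a b ha hb hab
    have hy_split : y = a • y + b • y := by rw [← add_smul, hab, one_smul]
    show L (a • t₁ + b • t₂) ∈ s
    convert hs ht₁ ht₂ ha hb hab using 1
    simp only [L, real_smul]
    nth_rewrite 1 [hy_split]
    module
  have hL0 : Tendsto L (𝓝 0) (𝓝 y) := by simpa [L] using hL.continuous.tendsto 0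
  have hfL := (hf.comp hL.differentiableOn (mapsTo_preimage _ _)).analyticOnNhd hDo
  have hgL := (hg.comp hL.differentiableOn (mapsTo_preimage _ _)).analyticOnNhd hDo
  have hline := hfL.eqOn_of_preconnected_of_eventuallyEq hgL hDc.isPreconnected
    (show L 0 ∈ s by simpa [L] using hy) (hL0.eventually hfg)
  simpa [L] using hline (show L 1 ∈ s by simpa [L] using hw)

theorem DifferentiableOn.eqOn_of_isPreconnected_of_eventuallyEq {U : Set E}
    (hf : DifferentiableOn ℂ f U) (hg : DifferentiableOn ℂ g U) (hUo : IsOpen U)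
    (hU : IsPreconnected U) {z₀ : E} (h₀ : z₀ ∈ U) (hfg : f =ᶠ[𝓝 z₀] g) : EqOn f g U := by
  suffices hsub : U ⊆ {x | f =ᶠ[𝓝 x] g} from fun x hx => (hsub hx).eq_of_nhds
  refine hU.subset_of_closure_inter_subset isOpen_setOfPred_eventually_nhds ⟨z₀, h₀, hfg⟩ ?_
  rintro x ⟨hxu, hxU⟩
  obtain ⟨r, hr, hrU⟩ := Metric.isOpen_iff.1 hUo x hxU
  obtain ⟨y, hyu, hxy⟩ := Metric.mem_closure_iff.1 hxu r hr
  have hball := (convex_ball x r).eqOn_of_eventuallyEq isOpen_ball (hf.mono hrU) (hg.mono hrU)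
    (mem_ball'.2 hxy) hyu
  exact eventually_of_mem (ball_mem_nhds x hr) hball

end IdentityPrinciple

section Polarization

variable {F : Type*} [NormedAddCommGroup F] [NormedSpace ℂ F] [CompleteSpace F]

theorem eqOn_zero_of_forall_ofReal_s14 {g : ℂ → F} {r : ℝ} (hg : DifferentiableOn ℂ g (ball 0 r))
    (h : ∀ x : ℝ, |x| < r → g x = 0) : EqOn g 0 (ball 0 r) := by
  rcases le_or_gt r 0 with hr | hr
  · simp [ball_eq_empty.2 hr]
  have hreal : ∀ᶠ x : ℝ in 𝓝[≠] 0, g x = 0 := by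
    filter_upwards [nhdsWithin_le_nhds (Ioo_mem_nhds (neg_lt_zero.2 hr) hr)] with x hx
    exact h x (abs_lt.2 hx)
  have hofReal : Tendsto ((↑) : ℝ → ℂ) (𝓝[≠] 0) (𝓝[≠] 0) := by
    simpa using continuous_ofReal.continuousWithinAt.tendsto_nhdsWithin (x := 0)
      fun _ _ => by simp_all
  exact (hg.analyticOnNhd isOpen_ball).eqOn_zero_of_preconnected_of_frequently_eq_zero
    (convex_ball 0 r).isPreconnected (mem_ball_self hr) (hofReal.frequently hreal.frequently)

theorem eqOn_zero_of_forall_ofReal₂ {H : ℂ × ℂ → F} {r : ℝ}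
    (hH : DifferentiableOn ℂ H (ball 0 r ×ˢ ball 0 r))
    (h : ∀ x y : ℝ, |x| < r → |y| < r → H (x, y) = 0) : EqOn H 0 (ball 0 r ×ˢ ball 0 r) := by
  have hslice₁ : ∀ v ∈ ball (0 : ℂ) r, DifferentiableOn ℂ (fun u => H (u, v)) (ball 0 r) :=
    fun v hv => hH.comp (by fun_prop) fun u hu => ⟨hu, hv⟩
  have hslice₂ : ∀ u ∈ ball (0 : ℂ) r, DifferentiableOn ℂ (fun v => H (u, v)) (ball 0 r) :=
    fun u hu => hH.comp (by fun_prop) fun v hv => ⟨hu, hv⟩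
  have hreal : ∀ y : ℝ, |y| < r → EqOn (fun u => H (u, y)) 0 (ball 0 r) := fun y hy =>
    eqOn_zero_of_forall_ofReal_s14 (hslice₁ y (by simpa using hy)) fun x hx => h x y hx hy
  rintro ⟨u, v⟩ ⟨hu, hv⟩
  exact eqOn_zero_of_forall_ofReal_s14 (hslice₂ u hu) (fun y hy => hreal y hy hu) hv

theorem eq_zero_of_forall_conj_eq_zero {G : ℂ × ℂ → F} {R : ℝ}
    (hG : DifferentiableOn ℂ G (ball 0 R ×ˢ ball 0 R)) (h : ∀ t : ℂ, ‖t‖ < R → G (t, conj t) = 0)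
    {a b : ℂ} (hab : ‖a‖ + ‖b‖ < R) : G (a, b) = 0 := by
  -- in the coordinates `(u, v) = ((a + b) / 2, (a - b) / (2 I))` the antidiagonal is `ℝ × ℝ`
  let H : ℂ × ℂ → F := fun p => G (p.1 + I * p.2, p.1 - I * p.2)
  have hnorm : ∀ u v : ℂ, ‖u‖ < R / 2 → ‖v‖ < R / 2 → ‖u + I * v‖ < R ∧ ‖u - I * v‖ < R := by
    intro u v hu hv
    constructor
    · calc ‖u + I * v‖ ≤ ‖u‖ + ‖v‖ := by simpa using norm_add_le u (I * v)
        _ < R := by linarith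
    · calc ‖u - I * v‖ ≤ ‖u‖ + ‖v‖ := by simpa using norm_sub_le u (I * v)
        _ < R := by linarith
  have hH : DifferentiableOn ℂ H (ball 0 (R / 2) ×ˢ ball 0 (R / 2)) := by
    refine hG.comp (by fun_prop) fun p hp => ?_
    simp only [mem_prod, mem_ball_zero_iff] at hp ⊢
    exact hnorm _ _ hp.1 hp.2
  have hHreal : ∀ x y : ℝ, |x| < R / 2 → |y| < R / 2 → H (x, y) = 0 := by
    intro x y hx hy
    have hconj : conj ((x : ℂ) + I * y) = x - I * y := by simp [sub_eq_add_neg]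
    simpa only [H, hconj] using h _ (hnorm x y (by simpa using hx) (by simpa using hy)).1
  have hu : ‖(a + b) / 2‖ < R / 2 := by
    rw [norm_div, RCLike.norm_ofNat]
    linarith [norm_add_le a b]
  have hv : ‖-I * (a - b) / 2‖ < R / 2 := by
    rw [norm_div, norm_mul, norm_neg, norm_I, one_mul, RCLike.norm_ofNat]
    linarith [norm_sub_le a b]
  have hab' : H ((a + b) / 2, -I * (a - b) / 2) = G (a, b) := by
    refine congrArg G (Prod.ext ?_ ?_)
    · linear_combination (-(a - b) / 2) * I_sq
    · linear_combination ((a - b) / 2) * I_sq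
  rw [← hab']
  exact eqOn_zero_of_forall_ofReal₂ hH hHreal ⟨mem_ball_zero_iff.2 hu, mem_ball_zero_iff.2 hv⟩

end Polarization

section HermitianSums

variable {ι κ : Type*} [Fintype ι] [Fintype κ]

theorem sum_mul_conj_eq_of_sum_norm_sq_eq_ball {A : ι → ℂ → ℂ} {B : κ → ℂ → ℂ} {R : ℝ}
    (hR : 1 < R) (hA : ∀ i, DifferentiableOn ℂ (A i) (ball 0 R))
    (hB : ∀ k, DifferentiableOn ℂ (B k) (ball 0 R))
    (hAB : ∀ t : ℂ, ‖t‖ < R → ∑ i, ‖A i t‖ ^ 2 = ∑ k, ‖B k t‖ ^ 2) :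
    ∑ i, A i 1 * conj (A i 0) = ∑ k, B k 1 * conj (B k 0) := by
  have hconj {g : ℂ → ℂ} (hg : DifferentiableOn ℂ g (ball 0 R)) :
      DifferentiableOn ℂ (fun w => conj (g (conj w))) (ball 0 R) := fun w hw =>
    (differentiableAt_conj_conj_iff.2 <| hg.differentiableAt <|
      isOpen_ball.mem_nhds (by simpa using hw)).differentiableWithinAt
  have hpolar {g : ℂ → ℂ} (hg : DifferentiableOn ℂ g (ball 0 R)) :
      DifferentiableOn ℂ (fun p : ℂ × ℂ => g p.1 * conj (g (conj p.2))) (ball 0 R ×ˢ ball 0 R) :=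
    (hg.comp differentiableOn_fst fun _ hp => hp.1).mul
      ((hconj hg).comp differentiableOn_snd fun _ hp => hp.2)
  let G : ℂ × ℂ → ℂ := fun p =>
    ∑ i, A i p.1 * conj (A i (conj p.2)) - ∑ k, B k p.1 * conj (B k (conj p.2))
  have hG : DifferentiableOn ℂ G (ball 0 R ×ˢ ball 0 R) :=
    (DifferentiableOn.fun_sum fun i _ => hpolar (hA i)).sub
      (DifferentiableOn.fun_sum fun k _ => hpolar (hB k))
  have hdiag (t : ℂ) (ht : ‖t‖ < R) : G (t, conj t) = 0 := by
    simp only [G, conj_conj, mul_conj', sub_eq_zero]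
    exact_mod_cast hAB t ht
  simpa [G, sub_eq_zero] using eq_zero_of_forall_conj_eq_zero hG hdiag (a := 1) (b := 0) (by simpa)

theorem sum_mul_conj_eq_of_sum_norm_sq_eq_s14 {E : Type*} [NormedAddCommGroup E] [NormedSpace ℂ E]
    {Ω : Set E} {A : ι → E → ℂ} {B : κ → E → ℂ} (hA : ∀ i, DifferentiableOn ℂ (A i) Ω)
    (hB : ∀ k, DifferentiableOn ℂ (B k) Ω)
    (hAB : ∀ w ∈ Ω, ∑ i, ‖A i w‖ ^ 2 = ∑ k, ‖B k w‖ ^ 2) {z : E} {R : ℝ} (hR : 1 < R)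
    (hz : ∀ t : ℂ, ‖t‖ < R → t • z ∈ Ω) :
    ∑ i, A i z * conj (A i 0) = ∑ k, B k z * conj (B k 0) := by
  have hline : MapsTo (fun t : ℂ => t • z) (ball 0 R) Ω := fun t ht =>
    hz t (mem_ball_zero_iff.1 ht)
  simpa using sum_mul_conj_eq_of_sum_norm_sq_eq_ball (A := fun i t => A i (t • z))
    (B := fun k t => B k (t • z)) hR (fun i => (hA i).comp (by fun_prop) hline)
    (fun k => (hB k).comp (by fun_prop) hline) fun t ht => hAB _ (hz t ht)

theorem sum_norm_sq_option_elim_mul_option_elim (a : ι → ℂ) (b : κ → ℂ) :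
    ∑ p : Option ι × Option κ, ‖p.1.elim 1 a * p.2.elim 1 b‖ ^ 2
      = (1 + ∑ i, ‖a i‖ ^ 2) * (1 + ∑ k, ‖b k‖ ^ 2) := by
  simp only [Fintype.sum_prod_type, norm_mul, mul_pow, ← Finset.mul_sum, ← Finset.sum_mul]
  simp [Fintype.sum_option]

theorem sum_norm_sq_option_elim_mul (a : ι → ℂ) (c : ℂ) :
    ∑ o : Option ι, ‖o.elim 1 a * c‖ ^ 2 = (1 + ∑ i, ‖a i‖ ^ 2) * ‖c‖ ^ 2 := by
  simp [Fintype.sum_option, mul_pow, add_mul, Finset.sum_mul]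

end HermitianSums

theorem exp_add_conj_eq_norm_exp_sq (z : ℂ) : exp (z + conj z) = ((‖exp z‖ ^ 2 : ℝ) : ℂ) := by
  rw [exp_add, exp_conj, mul_conj', ofReal_pow]

theorem add_conj_eq_zero_of_exp_mul_conj_exp_eq_one {a b : ℂ} (hab : exp a * conj (exp b) = 1)
    (hb : exp b * conj (exp b) = 1) : a + conj a = 0 := by
  have hb' : ‖exp b‖ = 1 := by
    rw [mul_conj'] at hb
    exact (pow_eq_one_iff_of_nonneg (norm_nonneg _) two_ne_zero).1 (by exact_mod_cast hb)
  have ha : ‖exp a‖ = 1 := by simpa [hb'] using congrArg norm hab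
  rw [norm_exp, Real.exp_eq_one_iff] at ha
  rw [add_conj, ha]
  simp

/-- Vanishing of the pluriharmonic factor in the proof of Theorem 1.1: if
`(1+‖z‖²)(1+Σᵢ|fᵢ(z)|²) = (1+Σₖ|hₖ(z)|²)·e^{φ(z)+conj(φ(z))}` on a connected open
neighborhood `Ω` of `0` with `f(0)=0`, `h(0)=0` and `f`, `h`, `φ` holomorphic, then
`φ(z)+conj(φ(z)) ≡ 0` and hence `(1+‖z‖²)(1+Σᵢ|fᵢ(z)|²) = 1+Σₖ|hₖ(z)|²` on `Ω`. -/
theorem pluriharmonic_factor_vanishes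
    (n d m : ℕ) (Ω : Set (Fin n → ℂ))
    (hΩo : IsOpen Ω) (hΩc : IsConnected Ω) (h0Ω : (0 : Fin n → ℂ) ∈ Ω)
    (f : Fin d → (Fin n → ℂ) → ℂ) (h : Fin m → (Fin n → ℂ) → ℂ)
    (φ : (Fin n → ℂ) → ℂ)
    (hf : ∀ i, DifferentiableOn ℂ (f i) Ω)
    (hh : ∀ k, DifferentiableOn ℂ (h k) Ω)
    (hφ : DifferentiableOn ℂ φ Ω)
    (hf0 : ∀ i, f i 0 = 0) (hh0 : ∀ k, h k 0 = 0)
    (heq : ∀ z ∈ Ω,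
      (((1 + ∑ j, ‖z j‖ ^ 2) * (1 + ∑ i, ‖f i z‖ ^ 2) : ℝ) : ℂ)
        = ((1 + ∑ k, ‖h k z‖ ^ 2 : ℝ) : ℂ)
            * Complex.exp (φ z + (starRingEnd ℂ) (φ z))) :
    (∀ z ∈ Ω, φ z + (starRingEnd ℂ) (φ z) = 0) ∧
    (∀ z ∈ Ω,
      (1 + ∑ j, ‖z j‖ ^ 2) * (1 + ∑ i, ‖f i z‖ ^ 2) = 1 + ∑ k, ‖h k z‖ ^ 2) := by
  let A (p : Option (Fin n) × Option (Fin d)) (w : Fin n → ℂ) : ℂ :=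
    p.1.elim 1 w * p.2.elim 1 (f · w)
  let B (o : Option (Fin m)) (w : Fin n → ℂ) : ℂ := o.elim 1 (h · w) * exp (φ w)
  have hA (p) : DifferentiableOn ℂ (A p) Ω := by
    rcases p with ⟨_ | j, _ | i⟩ <;> simp only [A, Option.elim] <;> fun_prop
  have hB (o) : DifferentiableOn ℂ (B o) Ω := by
    rcases o with _ | k <;> simp only [B, Option.elim] <;> fun_prop
  have hAB : ∀ w ∈ Ω, ∑ p, ‖A p w‖ ^ 2 = ∑ o, ‖B o w‖ ^ 2 := fun w hw => by
    have hw' := heq w hw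
    rw [exp_add_conj_eq_norm_exp_sq] at hw'
    rw [sum_norm_sq_option_elim_mul_option_elim, sum_norm_sq_option_elim_mul]
    exact_mod_cast hw'
  obtain ⟨ρ, hρ, hρΩ⟩ := Metric.isOpen_iff.1 hΩo 0 h0Ω
  have hnear : (fun w => exp (φ w) * conj (exp (φ 0))) =ᶠ[𝓝 0] fun _ => 1 := by
    filter_upwards [ball_mem_nhds 0 (half_pos hρ)] with z hz
    have hline (t : ℂ) (ht : ‖t‖ < 2) : t • z ∈ Ω := hρΩ <| by
      rw [mem_ball_zero_iff, norm_smul]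
      nlinarith [mem_ball_zero_iff.1 hz, norm_nonneg t, norm_nonneg z]
    simpa [A, B, Fintype.sum_prod_type, Fintype.sum_option, hf0, hh0] using
      (sum_mul_conj_eq_of_sum_norm_sq_eq_s14 hA hB hAB one_lt_two hline).symm
  have hone := (hφ.cexp.mul_const _).eqOn_of_isPreconnected_of_eventuallyEq
    (differentiableOn_const 1) hΩo hΩc.isPreconnected h0Ω hnear
  have hvan (z) (hz : z ∈ Ω) : φ z + conj (φ z) = 0 :=
    add_conj_eq_zero_of_exp_mul_conj_exp_eq_one (hone hz) (hone h0Ω)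
  refine ⟨hvan, fun z hz => ?_⟩
  have hz' := heq z hz
  rwa [hvan z hz, exp_zero, mul_one, ofReal_inj] at hz'
end
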